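/- arXiv:2309.12092 — 6 statements merged into one kernel-verified Lean document; each statement's English description precedes it below -/
import Mathlib

section
/- Let K be a convex body and C a full-dimensional convex body with 0 in its interior. The minimum diameter D_MIN(K,C) := max over directions s of max_{x−y ∈ (K−K)∩lin(s)} ‖x−y‖_C equals the standard diameter of K with respect to the symmetric gauge C ∩ (−C), i.e., D_MIN(K,C) = max_{x,y∈K} ‖x−y‖_{C∩(−C)}. -/
open Pointwise Set

lemma gauge_inter_neg_le {E : Type*} [NormedAddCommGroup E] [NormedSpace ℝ E]
    {C : Set E} (hCconv : Convex ℝ C) (hCcl : IsClosed C) (hCbdd : Bornology.IsBounded C)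
    (h0 : C ∈ nhds (0 : E)) (z : E) :
    gauge (C ∩ -C) z ≤ max (gauge C z) (gauge C (-z)) := by
  rcases eq_or_ne z 0 with rfl | hz
  · simp [gauge_zero, le_max_iff, gauge_nonneg]
  have habs : Absorbent ℝ C := absorbent_nhds_zero h0
  have hb : Bornology.IsVonNBounded ℝ C := (NormedSpace.isVonNBounded_iff ℝ).2 hCbdd
  set a : ℝ := max (gauge C z) (gauge C (-z)) with ha
  have hpos : 0 < a := lt_max_of_lt_left ((gauge_pos habs hb).2 hz)
  refine gauge_le_of_mem hpos.le ?_
  rw [mem_smul_set_iff_inv_smul_mem₀ hpos.ne']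
  have hmem : ∀ w : E, gauge C w ≤ a → a⁻¹ • w ∈ C := by
    intro w hw
    have : gauge C (a⁻¹ • w) ≤ 1 := by
      rw [gauge_smul_of_nonneg (inv_nonneg.2 hpos.le), smul_eq_mul]
      calc a⁻¹ * gauge C w ≤ a⁻¹ * a := by
            exact mul_le_mul_of_nonneg_left hw (inv_nonneg.2 hpos.le)
        _ = 1 := inv_mul_cancel₀ hpos.ne'
    have := (gauge_le_one_iff_mem_closure hCconv h0).1 this
    rwa [hCcl.closure_eq] at this
  constructor
  · exact hmem z (le_max_left _ _)
  · rw [Set.mem_neg, ← smul_neg]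
    exact hmem (-z) (le_max_right _ _)

/-- The minimum diameter `D_MIN(K,C)`, defined as the supremum over directions `s ≠ 0` of the
`s`-lengths `max_{x-y ∈ (K-K) ∩ lin(s)} ‖x-y‖_C`, equals the standard diameter of `K` with
respect to the symmetric gauge `C ∩ (-C)`. -/
theorem DMIN_eq_diameter_inter_neg {n : ℕ} (K C : Set (EuclideanSpace ℝ (Fin n)))
    (hKconv : Convex ℝ K) (hKcomp : IsCompact K) (hKne : K.Nonempty)
    (hCconv : Convex ℝ C) (hCcomp : IsCompact C) (h0 : 0 ∈ interior C) :
    sSup {d : ℝ | ∃ s : EuclideanSpace ℝ (Fin n), s ≠ 0 ∧ ∃ x ∈ K, ∃ y ∈ K,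
        (x - y) ∈ Submodule.span ℝ {s} ∧ d = gauge C (x - y)} =
      sSup {d : ℝ | ∃ x ∈ K, ∃ y ∈ K, d = gauge (C ∩ -C) (x - y)} := by
  let E := EuclideanSpace ℝ (Fin n)
  have hC0 : C ∈ nhds (0 : E) := mem_interior_iff_mem_nhds.1 h0
  have hD0 : C ∩ -C ∈ nhds (0 : E) :=
    Filter.inter_mem hC0 (neg_mem_nhds_zero _ hC0)
  have hDconv : Convex ℝ (C ∩ -C) := hCconv.inter hCconv.neg
  have habsD : Absorbent ℝ (C ∩ -C) := absorbent_nhds_zero hD0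
  -- boundedness of both sets
  have hbdd : ∀ S : Set E, Convex ℝ S → S ∈ nhds (0 : E) →
      BddAbove {d : ℝ | ∃ x ∈ K, ∃ y ∈ K, d = gauge S (x - y)} := by
    intro S hSconv hS0
    have hcont : Continuous fun p : E × E => gauge S (p.1 - p.2) :=
      (continuous_gauge hSconv hS0).comp (continuous_fst.sub continuous_snd)
    have hcomp : IsCompact (K ×ˢ K) := hKcomp.prod hKcomp
    refine (hcomp.bddAbove_image hcont.continuousOn).mono ?_
    rintro d ⟨x, hx, y, hy, rfl⟩
    exact ⟨(x, y), Set.mk_mem_prod hx hy, rfl⟩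
  have hbddB := hbdd (C ∩ -C) hDconv hD0
  have hbddA : BddAbove {d : ℝ | ∃ s : E, s ≠ 0 ∧ ∃ x ∈ K, ∃ y ∈ K,
      (x - y) ∈ Submodule.span ℝ {s} ∧ d = gauge C (x - y)} := by
    refine (hbdd C hCconv hC0).mono ?_
    rintro d ⟨s, hs, x, hx, y, hy, _, rfl⟩
    exact ⟨x, hx, y, hy, rfl⟩
  obtain ⟨k, hk⟩ := hKne
  by_cases hn : ∃ s : E, s ≠ 0
  · obtain ⟨s₀, hs₀⟩ := hn
    have h0A : (0 : ℝ) ∈ {d : ℝ | ∃ s : E, s ≠ 0 ∧ ∃ x ∈ K, ∃ y ∈ K,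
        (x - y) ∈ Submodule.span ℝ {s} ∧ d = gauge C (x - y)} :=
      ⟨s₀, hs₀, k, hk, k, hk, by simp, by simp [gauge_zero]⟩
    apply le_antisymm
    · refine csSup_le ⟨0, h0A⟩ ?_
      rintro d ⟨s, hs, x, hx, y, hy, _, rfl⟩
      calc gauge C (x - y) ≤ gauge (C ∩ -C) (x - y) :=
            gauge_mono habsD Set.inter_subset_left _
        _ ≤ _ := le_csSup hbddB ⟨x, hx, y, hy, rfl⟩
    · refine csSup_le ⟨0, k, hk, k, hk, by simp [gauge_zero]⟩ ?_
      rintro d ⟨x, hx, y, hy, rfl⟩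
      rcases eq_or_ne x y with rfl | hxy
      · simpa [gauge_zero] using le_csSup hbddA h0A
      · have hkey := gauge_inter_neg_le hCconv hCcomp.isClosed hCcomp.isBounded hC0 (x - y)
        refine hkey.trans (max_le ?_ ?_)
        · exact le_csSup hbddA ⟨x - y, sub_ne_zero.2 hxy, x, hx, y, hy,
            Submodule.mem_span_singleton_self _, rfl⟩
        · refine le_csSup hbddA ⟨x - y, sub_ne_zero.2 hxy, y, hy, x, hx, ?_, by rw [neg_sub]⟩
          rw [show y - x = (-1 : ℝ) • (x - y) by simp [neg_sub]]
          exact Submodule.smul_mem _ _ (Submodule.mem_span_singleton_self _)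
  · push_neg at hn
    have hA : {d : ℝ | ∃ s : E, s ≠ 0 ∧ ∃ x ∈ K, ∃ y ∈ K,
        (x - y) ∈ Submodule.span ℝ {s} ∧ d = gauge C (x - y)} = ∅ := by
      ext d; simp only [Set.mem_setOf_eq, Set.mem_empty_iff_false, iff_false]
      rintro ⟨s, hs, _⟩; exact hs (hn s)
    have hB : {d : ℝ | ∃ x ∈ K, ∃ y ∈ K, d = gauge (C ∩ -C) (x - y)} = {0} := by
      ext d
      simp only [Set.mem_setOf_eq, Set.mem_singleton_iff]
      constructor
      · rintro ⟨x, _, y, _, rfl⟩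
        have : x - y = 0 := by
          by_contra h; exact h (by simpa using hn (x - y))
        simp [this, gauge_zero]
      · rintro rfl; exact ⟨k, hk, k, hk, by simp [gauge_zero]⟩
    rw [hA, hB, Real.sSup_empty, csSup_singleton]
end

section
/- Let K ∈ C^n be a nondegenerate convex body (not a single point), C a gauge, and K* a completion of K with respect to the diameter D_m. Then K is optimally contained in K*, i.e., K ⊂ K* and R(K, K*) = 1. -/
open Pointwise Set

variable {V : Type*} [NormedAddCommGroup V] [NormedSpace ℝ V]

/-- Circumradius `R(K,C) = inf {ρ ≥ 0 : ∃ t, K ⊆ t + ρC}`. -/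
noncomputable def circumradius (K C : Set V) : ℝ :=
  sInf {ρ : ℝ | 0 ≤ ρ ∧ ∃ t : V, K ⊆ t +ᵥ ρ • C}

/-- Inradius `r(K,C) = sup {ρ ≥ 0 : ∃ t, t + ρC ⊆ K}`. -/
noncomputable def inradius (K C : Set V) : ℝ :=
  sSup {ρ : ℝ | 0 ≤ ρ ∧ ∃ t : V, t +ᵥ ρ • C ⊆ K}

/-- Optimal containment: `K ⊆ C` and `R(K,C) = 1`. -/
def OptCont (K C : Set V) : Prop := K ⊆ C ∧ circumradius K C = 1

/-- Minkowski asymmetry `s(C) = R(C, -C)`. -/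
noncomputable def minkAsym (C : Set V) : ℝ := circumradius C (-C)

/-- `C` is Minkowski-centered if `C ⊆opt s(C) • (-C)`. -/
def MinkowskiCentered (C : Set V) : Prop := OptCont C (minkAsym C • (-C))

/-- Arithmetic symmetrization `(K - K)/2`. -/
def symAM (K : Set V) : Set V := (2 : ℝ)⁻¹ • (K - K)

/-- Maximum symmetrization `conv (C ∪ -C)`. -/
def symMAX (C : Set V) : Set V := convexHull ℝ (C ∪ -C)

/-- Minimum symmetrization `C ∩ -C`. -/
def symMIN (C : Set V) : Set V := C ∩ -C

/-- The maximum diameter `D_MAX(K,C) = 2 R((K-K)/2, conv(C ∪ -C))`. -/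
noncomputable def DMAX (K C : Set V) : ℝ := 2 * circumradius (symAM K) (symMAX C)

/-- The minimum diameter `D_MIN(K,C) = 2 R((K-K)/2, C ∩ -C)`. -/
noncomputable def DMIN (K C : Set V) : ℝ := 2 * circumradius (symAM K) (symMIN C)

/-- A body is complete (w.r.t. a diameter functional `D`) if every strictly larger
convex body has strictly larger diameter. -/
def IsCompleteBody (D : Set V → ℝ) (K : Set V) : Prop :=
  ∀ K' : Set V, Convex ℝ K' → IsCompact K' → K ⊂ K' → D K < D K'

/-- `Kstar` is a completion of `K` w.r.t. the diameter functional `D`. -/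
def IsCompletion (D : Set V → ℝ) (K Kstar : Set V) : Prop :=
  K ⊆ Kstar ∧ Convex ℝ Kstar ∧ IsCompact Kstar ∧ IsCompleteBody D Kstar ∧ D Kstar = D K

/-- Polar set `C° = {a : ∀ x ∈ C, ⟪a,x⟫ ≤ 1}`. -/
def polarSet {n : ℕ} (C : Set (EuclideanSpace ℝ (Fin n))) : Set (EuclideanSpace ℝ (Fin n)) :=
  {a | ∀ x ∈ C, (inner ℝ a x : ℝ) ≤ 1}

/-- Harmonic symmetrization `C_HM = ((C° - C°)/2)°`. -/
def symHM {n : ℕ} (C : Set (EuclideanSpace ℝ (Fin n))) : Set (EuclideanSpace ℝ (Fin n)) :=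
  polarSet ((2 : ℝ)⁻¹ • (polarSet C - polarSet C))

/-- The harmonic diameter `D_HM(K,C) = 2 R((K-K)/2, C_HM)`. -/
noncomputable def DHM {n : ℕ} (K C : Set (EuclideanSpace ℝ (Fin n))) : ℝ :=
  2 * circumradius (symAM K) (symHM C)

/-- Support function `h_C(s) = sup_{x ∈ C} ⟪s, x⟫`. -/
noncomputable def supportFn {n : ℕ} (C : Set (EuclideanSpace ℝ (Fin n)))
    (s : EuclideanSpace ℝ (Fin n)) : ℝ :=
  sSup ((fun x => (inner ℝ s x : ℝ)) '' C)

/-! Since `K ⊆ K*`, `R(K, K*) ≤ 1`. Conversely, `K ⊆ t + ρ K*` gives `(K - K)/2 ⊆ ρ (K* - K*)/2`, so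
`D(K) ≤ ρ D(K*) = ρ D(K)`, and `D(K) > 0` because `K` is not a point and every symmetrization of
`C` is bounded; hence `ρ ≥ 1`. Every symmetrization is also a neighbourhood of `0`, so the infima
defining the circumradii are taken over nonempty sets rather than being the junk value `sInf ∅ = 0`. -/

open Bornology Metric Filter Topology

def coverScales (K C : Set V) : Set ℝ := {ρ | 0 ≤ ρ ∧ ∃ t : V, K ⊆ t +ᵥ ρ • C}

theorem circumradius_eq_sInf_coverScales (K C : Set V) :
    circumradius K C = sInf (coverScales K C) := rfl

theorem bddBelow_coverScales (K C : Set V) : BddBelow (coverScales K C) :=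
  ⟨0, fun _ hρ => hρ.1⟩

theorem circumradius_le_one_of_subset {K C : Set V} (h : K ⊆ C) : circumradius K C ≤ 1 :=
  csInf_le (bddBelow_coverScales K C) ⟨zero_le_one, 0, by simpa using h⟩

theorem coverScales_nonempty {K C : Set V} (hK : IsBounded K) (hC : C ∈ 𝓝 0) :
    (coverScales K C).Nonempty := by
  obtain ⟨r, hr, hsub⟩ := ((NormedSpace.isVonNBounded_iff ℝ).2 hK hC).exists_pos
  refine ⟨r, hr.le, 0, ?_⟩
  simpa using hsub r (by simp [abs_of_pos hr])

theorem smul_coverScales_subset {K L C : Set V} {ρ : ℝ} (hρ : 0 ≤ ρ) (hKL : K ⊆ ρ • L) :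
    ρ • coverScales L C ⊆ coverScales K C := by
  rintro _ ⟨σ, ⟨hσ, s, hLs⟩, rfl⟩
  refine ⟨mul_nonneg hρ hσ, ρ • s, fun x hx => ?_⟩
  obtain ⟨y, hy, rfl⟩ := hKL hx
  obtain ⟨_, ⟨c, hc, rfl⟩, rfl⟩ := hLs hy
  exact ⟨(ρ * σ) • c, smul_mem_smul_set hc, by simp [smul_add, smul_smul]⟩

theorem circumradius_le_mul_of_subset_smul {K L C : Set V} {ρ : ℝ} (hρ : 0 ≤ ρ)
    (hKL : K ⊆ ρ • L) (hL : (coverScales L C).Nonempty) :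
    circumradius K C ≤ ρ * circumradius L C := by
  rw [circumradius_eq_sInf_coverScales, circumradius_eq_sInf_coverScales, ← smul_eq_mul,
    ← Real.sInf_smul_of_nonneg hρ]
  exact csInf_le_csInf (bddBelow_coverScales K C) (hL.smul_set) (smul_coverScales_subset hρ hKL)

/-- Two distinct points of `t + ρ C` are at distance at most `2 ρ R` when `C ⊆ B(0, R)`, which
bounds `ρ` from below. -/
theorem circumradius_pos {K C : Set V} (hC : IsBounded C) (hK : K.Nontrivial)
    (hne : (coverScales K C).Nonempty) : 0 < circumradius K C := by
  obtain ⟨R, hR, hCR⟩ := hC.exists_pos_norm_le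
  obtain ⟨a, ha, b, hb, hab⟩ := hK
  have hdist : 0 < ‖a - b‖ := norm_pos_iff.2 (sub_ne_zero.2 hab)
  refine lt_of_lt_of_le (div_pos hdist (by positivity : (0 : ℝ) < 2 * R)) (le_csInf hne ?_)
  rintro ρ ⟨hρ, t, hKt⟩
  obtain ⟨_, ⟨c, hc, rfl⟩, hca⟩ := hKt ha
  obtain ⟨_, ⟨d, hd, rfl⟩, hdb⟩ := hKt hb
  have hcd : ‖c - d‖ ≤ 2 * R := by linarith [norm_sub_le c d, hCR c hc, hCR d hd]
  have hab' : ‖a - b‖ = ρ * ‖c - d‖ := by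
    rw [← hca, ← hdb]
    simp only [vadd_eq_add, add_sub_add_left_eq_sub, ← smul_sub, norm_smul, Real.norm_of_nonneg hρ]
  rw [div_le_iff₀ (by positivity), hab']
  exact mul_le_mul_of_nonneg_left hcd hρ

theorem half_smul_sub_mem_symAM {K : Set V} {a b : V} (ha : a ∈ K) (hb : b ∈ K) :
    (2 : ℝ)⁻¹ • (a - b) ∈ symAM K :=
  smul_mem_smul_set (sub_mem_sub ha hb)

theorem Set.Nontrivial.symAM {K : Set V} (hK : K.Nontrivial) : (symAM K).Nontrivial := by
  obtain ⟨a, ha, b, hb, hab⟩ := hK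
  refine ⟨_, half_smul_sub_mem_symAM ha hb, _, half_smul_sub_mem_symAM hb hb, ?_⟩
  simpa [sub_eq_zero] using hab

theorem isBounded_symAM {K : Set V} (hK : IsBounded K) : IsBounded (symAM K) :=
  (hK.sub hK).smul₀ _

theorem symAM_mem_nhds_zero {K : Set V} (hK : K ∈ 𝓝 0) : symAM K ∈ 𝓝 0 := by
  refine (set_smul_mem_nhds_zero_iff (by norm_num)).2 (mem_of_superset hK fun x hx => ?_)
  simpa using sub_mem_sub hx (mem_of_mem_nhds hK)

theorem symAM_subset_smul_of_subset_vadd_smul {K L : Set V} {t : V} {ρ : ℝ}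
    (h : K ⊆ t +ᵥ ρ • L) : symAM K ⊆ ρ • symAM L := by
  rintro _ ⟨_, ⟨a, ha, b, hb, rfl⟩, rfl⟩
  obtain ⟨_, ⟨a', ha', rfl⟩, rfl⟩ := h ha
  obtain ⟨_, ⟨b', hb', rfl⟩, rfl⟩ := h hb
  refine ⟨_, half_smul_sub_mem_symAM ha' hb', ?_⟩
  simp only [vadd_eq_add, add_sub_add_left_eq_sub, ← smul_sub, smul_comm ρ]

theorem symMIN_mem_nhds_zero {E : Type*} [NormedAddCommGroup E] {C : Set E} (hC : C ∈ 𝓝 0) :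
    symMIN C ∈ 𝓝 0 :=
  inter_mem hC (neg_mem_nhds_zero E hC)

theorem isBounded_symMIN {E : Type*} [NormedAddCommGroup E] {C : Set E} (hC : IsBounded C) :
    IsBounded (symMIN C) :=
  hC.subset inter_subset_left

theorem symMAX_mem_nhds_zero {C : Set V} (hC : C ∈ 𝓝 0) : symMAX C ∈ 𝓝 0 :=
  mem_of_superset hC (subset_union_left.trans (subset_convexHull ℝ _))

theorem isBounded_symMAX {C : Set V} (hC : IsBounded C) : IsBounded (symMAX C) :=
  isBounded_convexHull.2 (hC.union hC.neg)

section Polar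

variable {n : ℕ}

theorem polarSet_subset_closedBall {A : Set (EuclideanSpace ℝ (Fin n))} {r : ℝ} (hr : 0 < r)
    (hA : closedBall 0 r ⊆ A) : polarSet A ⊆ closedBall 0 r⁻¹ := by
  intro a ha
  rw [mem_closedBall_zero_iff]
  rcases eq_or_ne a 0 with rfl | ha0
  · simp [hr.le]
  have hna : 0 < ‖a‖ := norm_pos_iff.2 ha0
  have hx : (r / ‖a‖) • a ∈ A := hA (by
    rw [mem_closedBall_zero_iff, norm_smul, Real.norm_of_nonneg (by positivity),
      div_mul_cancel₀ _ hna.ne'])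
  have h1 := ha _ hx
  rw [real_inner_smul_right, real_inner_self_eq_norm_sq] at h1
  rw [← one_div, le_div_iff₀ hr]
  calc ‖a‖ * r = r / ‖a‖ * ‖a‖ ^ 2 := by field_simp
    _ ≤ 1 := h1

theorem closedBall_subset_polarSet {A : Set (EuclideanSpace ℝ (Fin n))} {r : ℝ} (hr : 0 < r)
    (hA : A ⊆ closedBall 0 r) : closedBall 0 r⁻¹ ⊆ polarSet A := by
  intro a ha x hx
  rw [mem_closedBall_zero_iff] at ha
  calc inner ℝ a x ≤ ‖a‖ * ‖x‖ := real_inner_le_norm a x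
    _ ≤ r⁻¹ * r := mul_le_mul ha (mem_closedBall_zero_iff.1 (hA hx)) (norm_nonneg x) (by positivity)
    _ = 1 := inv_mul_cancel₀ hr.ne'

theorem isBounded_polarSet {A : Set (EuclideanSpace ℝ (Fin n))} (hA : A ∈ 𝓝 0) :
    IsBounded (polarSet A) := by
  obtain ⟨r, hr, hrA⟩ := nhds_basis_closedBall.mem_iff.1 hA
  exact isBounded_closedBall.subset (polarSet_subset_closedBall hr hrA)

theorem polarSet_mem_nhds_zero {A : Set (EuclideanSpace ℝ (Fin n))} (hA : IsBounded A) :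
    polarSet A ∈ 𝓝 0 := by
  obtain ⟨R, hR, hAR⟩ := hA.exists_pos_norm_le
  exact mem_of_superset (closedBall_mem_nhds 0 (inv_pos.2 hR))
    (closedBall_subset_polarSet hR fun x hx => mem_closedBall_zero_iff.2 (hAR x hx))

theorem symHM_mem_nhds_zero {C : Set (EuclideanSpace ℝ (Fin n))} (hC : C ∈ 𝓝 0) :
    symHM C ∈ 𝓝 0 :=
  polarSet_mem_nhds_zero (isBounded_symAM (isBounded_polarSet hC))

theorem isBounded_symHM {C : Set (EuclideanSpace ℝ (Fin n))} (hC : IsBounded C) :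
    IsBounded (symHM C) :=
  isBounded_polarSet (symAM_mem_nhds_zero (polarSet_mem_nhds_zero hC))

end Polar

theorem circumradius_symAM_le_mul {K L C : Set V} {t : V} {ρ : ℝ} (hρ : 0 ≤ ρ)
    (h : K ⊆ t +ᵥ ρ • L) (hL : (coverScales (symAM L) C).Nonempty) :
    circumradius (symAM K) C ≤ ρ * circumradius (symAM L) C :=
  circumradius_le_mul_of_subset_smul hρ (symAM_subset_smul_of_subset_vadd_smul h) hL

theorem one_le_circumradius_of_circumradius_symAM_eq {K L C : Set V} (hKL : K ⊆ L)
    (hpos : 0 < circumradius (symAM K) C)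
    (heq : circumradius (symAM L) C = circumradius (symAM K) C)
    (hL : (coverScales (symAM L) C).Nonempty) : 1 ≤ circumradius K L := by
  refine le_csInf ⟨1, zero_le_one, 0, by simpa using hKL⟩ ?_
  rintro ρ ⟨hρ, t, hKt⟩
  have := circumradius_symAM_le_mul hρ hKt hL
  rw [heq] at this
  nlinarith

theorem completion_optimal_containment_general {n : ℕ} (K Kstar C : Set (EuclideanSpace ℝ (Fin n)))
    (hKne : K.Nonempty)
    (hKnd : ¬ ∃ p : EuclideanSpace ℝ (Fin n), K = {p})
    (hCcomp : IsCompact C) (h0 : 0 ∈ interior C)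
    (Cm : Set (EuclideanSpace ℝ (Fin n)))
    (hCm : Cm = symMIN C ∨ Cm = symHM C ∨ Cm = symAM C ∨ Cm = symMAX C)
    (hcompl : IsCompletion (fun K' => 2 * circumradius (symAM K') Cm) K Kstar) :
    OptCont K Kstar := by
  obtain ⟨hsub, -, hKscomp, -, hD⟩ := hcompl
  have hC0 : C ∈ 𝓝 0 := mem_interior_iff_mem_nhds.1 h0
  have hCb : IsBounded C := hCcomp.isBounded
  obtain ⟨hCm0, hCmb⟩ : Cm ∈ 𝓝 0 ∧ IsBounded Cm := by
    rcases hCm with rfl | rfl | rfl | rfl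
    exacts [⟨symMIN_mem_nhds_zero hC0, isBounded_symMIN hCb⟩,
      ⟨symHM_mem_nhds_zero hC0, isBounded_symHM hCb⟩,
      ⟨symAM_mem_nhds_zero hC0, isBounded_symAM hCb⟩,
      ⟨symMAX_mem_nhds_zero hC0, isBounded_symMAX hCb⟩]
  have hKnt : K.Nontrivial := hKne.exists_eq_singleton_or_nontrivial.resolve_left hKnd
  have hpos : 0 < circumradius (symAM K) Cm := circumradius_pos hCmb hKnt.symAM
    (coverScales_nonempty (isBounded_symAM (hKscomp.isBounded.subset hsub)) hCm0)
  have heq : circumradius (symAM Kstar) Cm = circumradius (symAM K) Cm := by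
    simpa using hD
  exact ⟨hsub, le_antisymm (circumradius_le_one_of_subset hsub)
    (one_le_circumradius_of_circumradius_symAM_eq hsub hpos heq
      (coverScales_nonempty (isBounded_symAM hKscomp.isBounded) hCm0))⟩

/-- If `Kstar` is a completion of a nondegenerate convex body `K` with respect to any of the
four diameters `D_m` (for the gauge `C`), then `K` is optimally contained in `Kstar`. -/
theorem completion_optimal_containment {n : ℕ} (K Kstar C : Set (EuclideanSpace ℝ (Fin n)))
    (hKconv : Convex ℝ K) (hKcomp : IsCompact K) (hKne : K.Nonempty)
    (hKnd : ¬ ∃ p : EuclideanSpace ℝ (Fin n), K = {p})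
    (hCconv : Convex ℝ C) (hCcomp : IsCompact C) (h0 : 0 ∈ interior C)
    (Cm : Set (EuclideanSpace ℝ (Fin n)))
    (hCm : Cm = symMIN C ∨ Cm = symHM C ∨ Cm = symAM C ∨ Cm = symMAX C)
    (hcompl : IsCompletion (fun K' => 2 * circumradius (symAM K') Cm) K Kstar) :
    OptCont K Kstar :=
  completion_optimal_containment_general K Kstar C hKne hKnd hCcomp h0 Cm hCm hcompl
end

section
/- Let C be a Minkowski-centered full-dimensional convex body in R^n. Then C_MAX ⊂ C^sup ⊂ C^out, where C^sup = ∩_{x∈C} (x + D_MAX(C,C)·C_MAX) is the supercompletion and C^out = ∩_{a ∈ bd(C°)∩bd(−C°)} {x : a·x ≤ 1} is the outer symmetric support. -/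
open Pointwise Set

variable {V : Type*} [NormedAddCommGroup V] [NormedSpace ℝ V]

/-!
Both inclusions rest on `D_MAX(C,C) = 2`. For `y ∈ C_MAX` and `x ∈ C` we have `-x ∈ C_MAX`, so
`y - x ∈ C_MAX + C_MAX = 2 • C_MAX` by convexity. If `a` and `-a` both lie on `bd C°`, then
`|⟪a, ·⟫| ≤ 1` on `C_MAX` and `⟪a, x₀⟫ = -1` at some `x₀ ∈ C`, so `⟪a, y⟫ ≤ 1` on `x₀ + 2 • C_MAX`.

The inclusion `(C - C)/2 ⊆ C_MAX` gives `D_MAX(C,C) ≤ 2`. Conversely, along a direction `u` with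
`h_C(u) = h_C(-u)` the sets `(C - C)/2` and `C_MAX` have the same width, which forces the
circumradius to be at least `1`. Such a `u` exists by the intermediate value theorem for the odd
function `u ↦ h_C(u) - h_C(-u)` on the connected unit sphere when `n ≥ 2`; when `n = 1`, a
Minkowski-centered segment is symmetric.
-/

open Metric Topology

section General

variable {C : Set V}

lemma IsPreconnected.exists_eq_zero_of_eq_neg {X : Type*} [TopologicalSpace X] {S : Set X}
    (hS : IsPreconnected S) {g : X → ℝ} (hg : ContinuousOn g S) {u v : X} (hu : u ∈ S)
    (hv : v ∈ S) (huv : g v = -g u) : ∃ w ∈ S, g w = 0 := by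
  rcases le_total (g u) 0 with h | h
  · exact hS.intermediate_value hu hv hg ⟨h, by linarith⟩
  · exact hS.intermediate_value hv hu hg ⟨by linarith, h⟩

lemma subset_symMAX : C ⊆ symMAX C :=
  subset_union_left.trans (subset_convexHull ℝ _)

lemma convex_symMAX : Convex ℝ (symMAX C) :=
  convex_convexHull ℝ _

lemma neg_mem_symMAX {x : V} (hx : x ∈ symMAX C) : -x ∈ symMAX C := by
  rw [symMAX, ← mem_neg, ← convexHull_neg, union_neg, neg_neg, union_comm]
  exact hx

lemma sub_mem_two_smul_symMAX {x y : V} (hx : x ∈ symMAX C) (hy : y ∈ symMAX C) :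
    x - y ∈ (2 : ℝ) • symMAX C := by
  rw [← one_add_one_eq_two, convex_symMAX.add_smul zero_le_one zero_le_one, one_smul,
    sub_eq_add_neg]
  exact add_mem_add hx (neg_mem_symMAX hy)

lemma symAM_subset_symMAX : symAM C ⊆ symMAX C := by
  rintro _ ⟨_, ⟨x, hx, y, hy, rfl⟩, rfl⟩
  exact (mem_smul_set_iff_inv_smul_mem₀ two_ne_zero _ _).1
    (sub_mem_two_smul_symMAX (subset_symMAX hx) (subset_symMAX hy))

lemma symMAX_subset_preimage_Icc (f : V →ₗ[ℝ] ℝ) {r : ℝ} (hC : C ⊆ f ⁻¹' Icc (-r) r) :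
    symMAX C ⊆ f ⁻¹' Icc (-r) r := by
  refine convexHull_min (union_subset hC fun x hx => ?_) ((convex_Icc _ _).linear_preimage f)
  have := hC hx
  simp only [mem_preimage, map_neg, mem_Icc] at this ⊢
  constructor <;> linarith [this.1, this.2]

lemma symMAX_subset_iInter_vadd_two_smul_symMAX :
    symMAX C ⊆ ⋂ x ∈ C, (x +ᵥ (2 : ℝ) • symMAX C) := fun y hy =>
  mem_iInter₂.2 fun x hx => by
    rw [mem_vadd_set_iff_neg_vadd_mem, vadd_eq_add, neg_add_eq_sub]
    exact sub_mem_two_smul_symMAX hy (subset_symMAX hx)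

lemma neg_eq_self_of_minkowskiCentered (hC : Convex ℝ C) (h0 : (0 : V) ∈ C)
    (hMC : MinkowskiCentered C) {t : V} (ht : C ⊆ t +ᵥ -C) : -C = C := by
  have hmem : (1 : ℝ) ∈ {ρ : ℝ | 0 ≤ ρ ∧ ∃ t : V, C ⊆ t +ᵥ ρ • -C} :=
    ⟨zero_le_one, t, by rwa [one_smul]⟩
  have hs : minkAsym C ∈ Icc (0 : ℝ) 1 :=
    ⟨le_csInf ⟨1, hmem⟩ fun _ hρ => hρ.1, csInf_le ⟨0, fun _ hρ => hρ.1⟩ hmem⟩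
  have hsub : C ⊆ -C := hMC.1.trans <| by
    rintro _ ⟨x, hx, rfl⟩
    exact hC.neg.smul_mem_of_zero_mem (by simpa using h0) hx hs
  exact (neg_subset.2 hsub).antisymm hsub

lemma exists_subset_vadd_neg_of_equiv_real (L : V ≃L[ℝ] ℝ) (hCconv : Convex ℝ C)
    (hCcomp : IsCompact C) (hne : C.Nonempty) : ∃ t : V, C ⊆ t +ᵥ -C := by
  obtain ⟨a, b, hIcc⟩ : ∃ a b, L '' C = Icc a b :=
    ⟨_, _, eq_Icc_of_connected_compact
      ⟨hne.image L, (hCconv.linear_image L.toLinearMap).isPreconnected⟩ (hCcomp.image L.continuous)⟩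
  refine ⟨L.symm (a + b), fun x hx => ?_⟩
  have hLx : L x ∈ L '' C := mem_image_of_mem L hx
  rw [hIcc] at hLx
  obtain ⟨y, hy, hyx⟩ : a + b - L x ∈ L '' C := by
    rw [hIcc]; constructor <;> linarith [hLx.1, hLx.2]
  rw [mem_vadd_set_iff_neg_vadd_mem, mem_neg]
  convert hy using 1
  apply L.injective
  simp [hyx]
  ring

end General

section SupportFunction

variable {n : ℕ} {C : Set (EuclideanSpace ℝ (Fin n))}

lemma inner_le_supportFn (hC : IsCompact C) {x : EuclideanSpace ℝ (Fin n)} (hx : x ∈ C)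
    (u : EuclideanSpace ℝ (Fin n)) : inner ℝ u x ≤ supportFn C u :=
  le_csSup (hC.image (by fun_prop)).bddAbove (mem_image_of_mem _ hx)

lemma supportFn_le (hne : C.Nonempty) {u : EuclideanSpace ℝ (Fin n)} {r : ℝ}
    (h : ∀ x ∈ C, inner ℝ u x ≤ r) : supportFn C u ≤ r :=
  csSup_le (hne.image _) (forall_mem_image.2 h)

lemma exists_inner_eq_supportFn (hC : IsCompact C) (hne : C.Nonempty)
    (u : EuclideanSpace ℝ (Fin n)) : ∃ x ∈ C, inner ℝ u x = supportFn C u := by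
  obtain ⟨x, hx, hmax⟩ :=
    hC.exists_isMaxOn hne (f := fun x => inner ℝ u x) (by fun_prop : Continuous _).continuousOn
  exact ⟨x, hx, (inner_le_supportFn hC hx u).antisymm (supportFn_le hne fun y hy => hmax hy)⟩

lemma continuous_supportFn (hC : IsCompact C) : Continuous (supportFn C) :=
  hC.continuous_sSup (f := fun u x => inner ℝ u x) (by fun_prop)

lemma supportFn_pos (hC : IsCompact C) (h0 : 0 ∈ interior C) {u : EuclideanSpace ℝ (Fin n)}
    (hu : u ≠ 0) : 0 < supportFn C u := by
  have hlim : Filter.Tendsto (fun c : ℝ => c • u) (𝓝[>] 0) (𝓝 0) :=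
    ((by fun_prop : Continuous fun c : ℝ => c • u).tendsto' 0 0 (zero_smul ℝ u)).mono_left
      nhdsWithin_le_nhds
  obtain ⟨c, hcC, hc⟩ :=
    ((hlim.eventually (mem_interior_iff_mem_nhds.1 h0)).and self_mem_nhdsWithin).exists
  calc (0 : ℝ) < c * ‖u‖ ^ 2 := mul_pos hc (pow_pos (norm_pos_iff.2 hu) 2)
    _ = inner ℝ u (c • u) := by rw [real_inner_smul_right, real_inner_self_eq_norm_sq]
    _ ≤ supportFn C u := inner_le_supportFn hC hcC u

lemma supportFn_neg_of_neg_eq (hC : -C = C) (u : EuclideanSpace ℝ (Fin n)) :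
    supportFn C (-u) = supportFn C u := by
  unfold supportFn
  congr 1
  conv_lhs => rw [← hC, ← image_neg_eq_neg, image_image]
  simp [inner_neg_left, inner_neg_right]

lemma isClosed_polarSet : IsClosed (polarSet C) := by
  simp only [polarSet, ofPred_forall]
  exact isClosed_biInter fun x _ => isClosed_le (by fun_prop) continuous_const

lemma exists_inner_eq_one_of_mem_frontier_polarSet (hC : IsCompact C) (hne : C.Nonempty)
    {a : EuclideanSpace ℝ (Fin n)} (ha : a ∈ frontier (polarSet C)) :
    ∃ x ∈ C, inner ℝ a x = 1 := by
  have hlt : ¬ supportFn C a < 1 := fun hlt =>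
    ha.2 <| interior_maximal (s := polarSet C) (t := {b | supportFn C b < 1})
      (fun b (hb : supportFn C b < 1) x hx => (inner_le_supportFn hC hx b).trans hb.le)
      (isOpen_lt (continuous_supportFn hC) continuous_const) hlt
  obtain ⟨x, hx, hxa⟩ := exists_inner_eq_supportFn hC hne a
  exact ⟨x, hx, hxa.trans
    ((supportFn_le hne (isClosed_polarSet.frontier_subset ha)).antisymm (not_lt.1 hlt))⟩

end SupportFunction

section Diameter

variable {n : ℕ} {C : Set (EuclideanSpace ℝ (Fin n))}

lemma one_le_of_symAM_subset_vadd_smul_symMAX (hC : IsCompact C) (hne : C.Nonempty)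
    {u : EuclideanSpace ℝ (Fin n)} (hu : supportFn C u = supportFn C (-u))
    (hpos : 0 < supportFn C u) {ρ : ℝ} (hρ : 0 ≤ ρ) {t : EuclideanSpace ℝ (Fin n)}
    (hsub : symAM C ⊆ t +ᵥ ρ • symMAX C) : 1 ≤ ρ := by
  set m := supportFn C u
  have hbound : symMAX C ⊆ innerₛₗ ℝ u ⁻¹' Icc (-m) m := by
    refine symMAX_subset_preimage_Icc _ fun x hx => ⟨?_, inner_le_supportFn hC hx u⟩
    have := inner_le_supportFn hC hx (-u)
    rw [inner_neg_left, ← hu] at this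
    simp only [innerₛₗ_apply_apply]
    linarith
  obtain ⟨p, hp, hpu⟩ := exists_inner_eq_supportFn hC hne u
  obtain ⟨q, hq, hqu⟩ := exists_inner_eq_supportFn hC hne (-u)
  rw [inner_neg_left, ← hu] at hqu
  have hrep : ∀ z ∈ symAM C, ∃ w ∈ symMAX C, ρ • w = z - t := fun z hz => by
    simpa [neg_add_eq_sub] using mem_smul_set.1 (mem_vadd_set_iff_neg_vadd_mem.1 (hsub hz))
  obtain ⟨w₁, hw₁, hw₁z⟩ := hrep _ (smul_mem_smul_set (sub_mem_sub hp hq))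
  obtain ⟨w₂, hw₂, hw₂z⟩ := hrep _ (smul_mem_smul_set (sub_mem_sub hq hp))
  have hdiff : ρ • (w₁ - w₂) = p - q := by
    rw [smul_sub, hw₁z, hw₂z]
    module
  have hwidth : ρ * (inner ℝ u w₁ - inner ℝ u w₂) = 2 * m := by
    rw [← inner_sub_right, ← real_inner_smul_right, hdiff, inner_sub_right]
    linarith
  have h₁ := (hbound hw₁).2
  have h₂ := (hbound hw₂).1
  simp only [innerₛₗ_apply_apply] at h₁ h₂
  nlinarith

lemma circumradius_symAM_symMAX_eq_one (hC : IsCompact C) (h0 : 0 ∈ interior C)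
    {u : EuclideanSpace ℝ (Fin n)} (hu₀ : u ≠ 0) (hu : supportFn C u = supportFn C (-u)) :
    circumradius (symAM C) (symMAX C) = 1 := by
  have hmem : (1 : ℝ) ∈
      {ρ : ℝ | 0 ≤ ρ ∧ ∃ t : EuclideanSpace ℝ (Fin n), symAM C ⊆ t +ᵥ ρ • symMAX C} :=
    ⟨zero_le_one, 0, by simpa using symAM_subset_symMAX⟩
  refine (csInf_le ⟨0, fun _ hρ => hρ.1⟩ hmem).antisymm (le_csInf ⟨1, hmem⟩ ?_)
  rintro ρ ⟨hρ, t, ht⟩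
  exact one_le_of_symAM_subset_vadd_smul_symMAX hC ⟨0, interior_subset h0⟩ hu
    (supportFn_pos hC h0 hu₀) hρ ht

lemma exists_supportFn_eq_supportFn_neg_of_two_le (hn : 2 ≤ n) (hC : IsCompact C) :
    ∃ u ≠ 0, supportFn C u = supportFn C (-u) := by
  have hconn : IsConnected (sphere (0 : EuclideanSpace ℝ (Fin n)) 1) := by
    refine isConnected_sphere ?_ 0 zero_le_one
    rw [← Module.finrank_eq_rank, finrank_euclideanSpace_fin]
    exact_mod_cast hn
  set u₀ : EuclideanSpace ℝ (Fin n) := EuclideanSpace.single ⟨0, by omega⟩ 1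
  have hu₀ : u₀ ∈ sphere (0 : EuclideanSpace ℝ (Fin n)) 1 := by simp [u₀]
  set g := fun v => supportFn C v - supportFn C (-v)
  have hg : Continuous g :=
    (continuous_supportFn hC).sub ((continuous_supportFn hC).comp continuous_neg)
  have hodd : g (-u₀) = -g u₀ := by simp only [g, neg_neg, neg_sub]
  obtain ⟨u, hu, hgu⟩ := hconn.isPreconnected.exists_eq_zero_of_eq_neg hg.continuousOn
    hu₀ (by simpa using hu₀) hodd
  exact ⟨u, ne_zero_of_mem_sphere one_ne_zero ⟨u, hu⟩, sub_eq_zero.1 hgu⟩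

lemma neg_eq_self_of_minkowskiCentered_of_fin_one {C : Set (EuclideanSpace ℝ (Fin 1))}
    (hCconv : Convex ℝ C) (hCcomp : IsCompact C) (h0 : (0 : EuclideanSpace ℝ (Fin 1)) ∈ C)
    (hMC : MinkowskiCentered C) : -C = C := by
  obtain ⟨t, ht⟩ := exists_subset_vadd_neg_of_equiv_real
    ((EuclideanSpace.equiv (Fin 1) ℝ).trans (ContinuousLinearEquiv.funUnique (Fin 1) ℝ ℝ))
    hCconv hCcomp ⟨0, h0⟩
  exact neg_eq_self_of_minkowskiCentered hCconv h0 hMC ht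

lemma DMAX_self_eq_two (hn : n ≠ 0) (hCconv : Convex ℝ C) (hCcomp : IsCompact C)
    (h0 : 0 ∈ interior C) (hMC : MinkowskiCentered C) : DMAX C C = 2 := by
  obtain ⟨u, hu₀, hu⟩ : ∃ u ≠ 0, supportFn C u = supportFn C (-u) := by
    obtain rfl | hn := (Nat.one_le_iff_ne_zero.2 hn).eq_or_lt
    · refine ⟨EuclideanSpace.single 0 1, by simp, (supportFn_neg_of_neg_eq ?_ _).symm⟩
      exact neg_eq_self_of_minkowskiCentered_of_fin_one hCconv hCcomp (interior_subset h0) hMC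
    · exact exists_supportFn_eq_supportFn_neg_of_two_le hn hCcomp
  rw [DMAX, circumradius_symAM_symMAX_eq_one hCcomp h0 hu₀ hu, mul_one]

lemma iInter_vadd_two_smul_symMAX_subset (hC : IsCompact C) (hne : C.Nonempty) :
    ⋂ x ∈ C, (x +ᵥ (2 : ℝ) • symMAX C) ⊆
      {y | ∀ a ∈ frontier (polarSet C) ∩ frontier (-(polarSet C)), inner ℝ a y ≤ 1} := by
  intro y hy a ⟨ha, ha'⟩
  have hna : -a ∈ frontier (polarSet C) := by
    have := mem_image_of_mem (Homeomorph.neg (EuclideanSpace ℝ (Fin n))) ha'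
    rwa [Homeomorph.image_frontier, Homeomorph.coe_neg, image_neg_eq_neg, neg_neg] at this
  obtain ⟨x₀, hx₀, hax₀⟩ := exists_inner_eq_one_of_mem_frontier_polarSet hC hne hna
  have hbound : symMAX C ⊆ innerₛₗ ℝ a ⁻¹' Icc (-1) 1 := by
    refine symMAX_subset_preimage_Icc _ fun x hx =>
      ⟨?_, isClosed_polarSet.frontier_subset ha x hx⟩
    have := isClosed_polarSet.frontier_subset hna x hx
    rw [inner_neg_left] at this
    simp only [innerₛₗ_apply_apply]
    linarith
  obtain ⟨w, hw, hwy⟩ :=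
    mem_smul_set.1 (mem_vadd_set_iff_neg_vadd_mem.1 (mem_iInter₂.1 hy x₀ hx₀))
  have hy : y = x₀ + (2 : ℝ) • w := by rw [hwy, vadd_eq_add]; abel
  have := (hbound hw).2
  rw [inner_neg_left] at hax₀
  simp only [innerₛₗ_apply_apply] at this
  rw [hy, inner_add_right, real_inner_smul_right]
  linarith

end Diameter

/-- For a Minkowski-centered gauge `C`: `C_MAX ⊆ C^sup ⊆ C^out`, where `C^sup` is the
supercompletion `⋂_{x ∈ C} (x + D_MAX(C,C) • C_MAX)` and `C^out` is the outer symmetric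
support `⋂_{a ∈ bd(C°) ∩ bd(-C°)} {y : ⟪a,y⟫ ≤ 1}`. -/
theorem CMAX_subset_sup_subset_out {n : ℕ} (C : Set (EuclideanSpace ℝ (Fin n)))
    (hCconv : Convex ℝ C) (hCcomp : IsCompact C) (h0 : 0 ∈ interior C)
    (hMC : MinkowskiCentered C) :
    symMAX C ⊆ ⋂ x ∈ C, (x +ᵥ DMAX C C • symMAX C) ∧
      (⋂ x ∈ C, (x +ᵥ DMAX C C • symMAX C)) ⊆
        {y : EuclideanSpace ℝ (Fin n) |
          ∀ a ∈ frontier (polarSet C) ∩ frontier (-(polarSet C)), (inner ℝ a y : ℝ) ≤ 1} := by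
  obtain rfl | hn := eq_or_ne n 0
  · refine ⟨fun y _ => mem_iInter₂.2 fun x _ => ?_, fun y _ a _ => ?_⟩
    · rw [Subsingleton.elim y (x +ᵥ DMAX C C • (0 : EuclideanSpace ℝ (Fin 0)))]
      exact vadd_mem_vadd_set (smul_mem_smul_set (subset_symMAX (interior_subset h0)))
    · simp [Subsingleton.elim a 0]
  rw [DMAX_self_eq_two hn hCconv hCcomp h0 hMC]
  exact ⟨symMAX_subset_iInter_vadd_two_smul_symMAX,
    iInter_vadd_two_smul_symMAX_subset hCcomp ⟨0, interior_subset h0⟩⟩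
end

section
/- Let T be the Minkowski-centered equilateral triangle with vertices p¹ = (0,1), p² = (−√3/2,−1/2), p³ = (√3/2,−1/2), and for λ ∈ [1/2, 1] let S_λ = conv({q¹,q²,q³}) with q¹ = (p²+p³)/2, q² = λp¹+(1−λ)p³, q³ = λp¹+(1−λ)p². Then R(S_λ, T) = 1, D_MAX(S_λ, T) = λ + 1/2, and r(S_λ, T) = λ(1−λ). -/
open Pointwise Set

variable {V : Type*} [NormedAddCommGroup V] [NormedSpace ℝ V]

lemma combo3_mem {K : Set V} (hK : Convex ℝ K) {x y z : V} (hx : x ∈ K) (hy : y ∈ K) (hz : z ∈ K)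
    {a b c : ℝ} (ha : 0 ≤ a) (hb : 0 ≤ b) (hc : 0 ≤ c) (habc : a + b + c = 1) :
    a • x + b • y + c • z ∈ K := by
  have := hK.sum_mem (t := Finset.univ) (w := ![a,b,c]) (z := ![x,y,z])
    (by intro i _; fin_cases i <;> simpa) (by simp [Fin.sum_univ_three]; linarith)
    (by intro i _; fin_cases i <;> simpa)
  simpa [Fin.sum_univ_three, add_assoc] using this

lemma combo4_mem {K : Set V} (hK : Convex ℝ K) {x y z w : V} (hx : x ∈ K) (hy : y ∈ K)
    (hz : z ∈ K) (hw : w ∈ K) {a b c d : ℝ} (ha : 0 ≤ a) (hb : 0 ≤ b) (hc : 0 ≤ c) (hd : 0 ≤ d)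
    (habcd : a + b + c + d = 1) :
    a • x + b • y + c • z + d • w ∈ K := by
  have := hK.sum_mem (t := Finset.univ) (w := ![a,b,c,d]) (z := ![x,y,z,w])
    (by intro i _; fin_cases i <;> simpa) (by simp [Fin.sum_univ_four]; linarith)
    (by intro i _; fin_cases i <;> simpa)
  simpa [Fin.sum_univ_four, add_assoc] using this

lemma lin_le_hull (a b c : ℝ) (A : Set (Fin 2 → ℝ))
    (h : ∀ x ∈ A, a * x 0 + b * x 1 ≤ c) :
    ∀ v ∈ convexHull ℝ A, a * v 0 + b * v 1 ≤ c := by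
  have hlin : IsLinearMap ℝ (fun v : Fin 2 → ℝ => a * v 0 + b * v 1) :=
    ⟨fun x y => by simp [Pi.add_apply]; ring, fun r x => by simp [Pi.smul_apply, smul_eq_mul]; ring⟩
  exact fun v hv => convexHull_min h (convex_halfSpace_le hlin c) hv

lemma convex_comb_pre {K : Set V} (hK : Convex ℝ K) (c : ℝ) (w : V) :
    Convex ℝ {x | c • x + w ∈ K} := by
  intro x hx y hy a b ha hb hab
  have h : c • (a • x + b • y) + w = a • (c • x + w) + b • (c • y + w) := by
    have hw : w = a • w + b • w := by rw [← add_smul, hab, one_smul]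
    nth_rewrite 1 [hw]; module
  simp only [Set.mem_setOf_eq, h]
  exact hK hx hy ha hb hab

lemma mem_vadd_smul {A : Set (Fin 2 → ℝ)} {x t : Fin 2 → ℝ} {c : ℝ} (h : x ∈ t +ᵥ c • A) :
    ∃ y ∈ A, x = t + c • y := by
  rw [Set.mem_vadd_set] at h
  obtain ⟨z, hz, hzx⟩ := h
  rw [Set.mem_smul_set] at hz
  obtain ⟨y, hy, rfl⟩ := hz
  exact ⟨y, hy, by rw [← hzx]; rfl⟩
set_option maxHeartbeats 1600000 in
/-- For the Minkowski-centered equilateral triangle `T` and the triangles `S_λ`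
(λ ∈ [1/2, 1]): `R(S_λ,T) = 1`, `D_MAX(S_λ,T) = λ + 1/2` and `r(S_λ,T) = λ(1-λ)`. -/
theorem Slambda_values (lam : ℝ) (hlam : lam ∈ Set.Icc (1/2 : ℝ) 1) :
    let p1 : Fin 2 → ℝ := ![0, 1]
    let p2 : Fin 2 → ℝ := ![-(Real.sqrt 3 / 2), -(1/2)]
    let p3 : Fin 2 → ℝ := ![Real.sqrt 3 / 2, -(1/2)]
    let T : Set (Fin 2 → ℝ) := convexHull ℝ {p1, p2, p3}
    let Slam : Set (Fin 2 → ℝ) :=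
      convexHull ℝ {(2:ℝ)⁻¹ • (p2 + p3), lam • p1 + (1 - lam) • p3, lam • p1 + (1 - lam) • p2}
    circumradius Slam T = 1 ∧ DMAX Slam T = lam + 1/2 ∧ inradius Slam T = lam * (1 - lam) := by
  obtain ⟨hl1, hl2⟩ := hlam
  intro p1 p2 p3 T Slam
  have hp1 : p1 = ![0, 1] := rfl
  have hp2 : p2 = ![-(Real.sqrt 3 / 2), -(1/2)] := rfl
  have hp3 : p3 = ![Real.sqrt 3 / 2, -(1/2)] := rfl
  have hs : Real.sqrt 3 ^ 2 = 3 := Real.sq_sqrt (by norm_num)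
  have hs0 : (0:ℝ) ≤ Real.sqrt 3 := Real.sqrt_nonneg 3
  set q1 : Fin 2 → ℝ := (2:ℝ)⁻¹ • (p2 + p3) with hq1
  set q2 : Fin 2 → ℝ := lam • p1 + (1 - lam) • p3 with hq2
  set q3 : Fin 2 → ℝ := lam • p1 + (1 - lam) • p2 with hq3
  have hSlam : Slam = convexHull ℝ {q1, q2, q3} := rfl
  have hT : T = convexHull ℝ {p1, p2, p3} := rfl
  -- coordinates
  have hq1c : q1 0 = 0 ∧ q1 1 = -(1/2) := by
    constructor <;> simp [hq1, hp2, hp3] <;> ring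
  have hq2c : q2 0 = (1 - lam) * (Real.sqrt 3 / 2) ∧ q2 1 = lam - (1 - lam) / 2 := by
    constructor <;> simp [hq2, hp1, hp3] <;> ring
  have hq3c : q3 0 = -((1 - lam) * (Real.sqrt 3 / 2)) ∧ q3 1 = lam - (1 - lam) / 2 := by
    constructor <;> simp [hq3, hp1, hp2] <;> ring
  -- memberships of vertices
  have hmq1 : q1 ∈ Slam := subset_convexHull ℝ _ (Set.mem_insert _ _)
  have hmq2 : q2 ∈ Slam := subset_convexHull ℝ _ (Set.mem_insert_of_mem _ (Set.mem_insert _ _))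
  have hmq3 : q3 ∈ Slam :=
    subset_convexHull ℝ _ (Set.mem_insert_of_mem _ (Set.mem_insert_of_mem _ rfl))
  have hmp1 : p1 ∈ T := subset_convexHull ℝ _ (by simp)
  have hmp2 : p2 ∈ T := subset_convexHull ℝ _ (by simp)
  have hmp3 : p3 ∈ T := subset_convexHull ℝ _ (by simp)
  -- functional bounds on T
  have bT1 : ∀ v ∈ T, (0:ℝ) * v 0 + (-1) * v 1 ≤ 1/2 := by
    apply lin_le_hull
    rintro x (rfl | rfl | rfl) <;> simp [hp1, hp2, hp3] <;> norm_num
  have bT2 : ∀ v ∈ T, Real.sqrt 3 * v 0 + 1 * v 1 ≤ 1 := by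
    apply lin_le_hull
    rintro x (rfl | rfl | rfl) <;> simp [hp1, hp2, hp3] <;> nlinarith [hs]
  have bT3 : ∀ v ∈ T, -Real.sqrt 3 * v 0 + 1 * v 1 ≤ 1 := by
    apply lin_le_hull
    rintro x (rfl | rfl | rfl) <;> simp [hp1, hp2, hp3] <;> nlinarith [hs]
  -- Claim 1 : circumradius Slam T = 1
  have hSsubT : Slam ⊆ T := by
    rw [hSlam]
    apply convexHull_min _ (convex_convexHull ℝ _)
    rintro x (rfl | rfl | rfl)
    · have : q1 = (2:ℝ)⁻¹ • p2 + (2:ℝ)⁻¹ • p3 := by rw [hq1]; module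
      rw [this]
      exact (convex_convexHull ℝ _) hmp2 hmp3 (by norm_num) (by norm_num) (by norm_num)
    · exact (convex_convexHull ℝ _) hmp1 hmp3 (by linarith) (by linarith) (by ring)
    · exact (convex_convexHull ℝ _) hmp1 hmp2 (by linarith) (by linarith) (by ring)
  have hmem1 : (1:ℝ) ∈ {ρ : ℝ | 0 ≤ ρ ∧ ∃ t : Fin 2 → ℝ, Slam ⊆ t +ᵥ ρ • T} := by
    refine ⟨zero_le_one, 0, ?_⟩
    rw [zero_vadd, one_smul]
    exact hSsubT
  have hlow : ∀ ρ ∈ {ρ : ℝ | 0 ≤ ρ ∧ ∃ t : Fin 2 → ℝ, Slam ⊆ t +ᵥ ρ • T}, (1:ℝ) ≤ ρ := by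
    rintro ρ ⟨hρ0, t, ht⟩
    obtain ⟨x1, hx1, he1⟩ := mem_vadd_smul (ht hmq1)
    obtain ⟨x2, hx2, he2⟩ := mem_vadd_smul (ht hmq2)
    obtain ⟨x3, hx3, he3⟩ := mem_vadd_smul (ht hmq3)
    have c11 : q1 1 = t 1 + ρ * x1 1 := by rw [he1]; simp
    have c20 : q2 0 = t 0 + ρ * x2 0 := by rw [he2]; simp
    have c21 : q2 1 = t 1 + ρ * x2 1 := by rw [he2]; simp
    have c30 : q3 0 = t 0 + ρ * x3 0 := by rw [he3]; simp
    have c31 : q3 1 = t 1 + ρ * x3 1 := by rw [he3]; simp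
    have b1 := bT1 x1 hx1
    have b2 := bT2 x2 hx2
    have b3 := bT3 x3 hx3
    rw [hq1c.2] at c11
    rw [hq2c.1] at c20; rw [hq2c.2] at c21
    rw [hq3c.1] at c30; rw [hq3c.2] at c31
    nlinarith [mul_le_mul_of_nonneg_left b1 hρ0, mul_le_mul_of_nonneg_left b2 hρ0,
      mul_le_mul_of_nonneg_left b3 hρ0, hs, hs0, mul_nonneg hρ0 hs0]
  have claim1 : circumradius Slam T = 1 := by
    unfold circumradius
    exact le_antisymm (csInf_le ⟨0, fun ρ hρ => hρ.1⟩ hmem1) (le_csInf ⟨1, hmem1⟩ hlow)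
  -- Claim 3 : inradius
  have hSconv : Convex ℝ Slam := hSlam ▸ convex_convexHull ℝ _
  have bS1 : ∀ v ∈ Slam, (0:ℝ) * v 0 + 1 * v 1 ≤ (3*lam - 1)/2 := by
    rw [hSlam]; apply lin_le_hull
    rintro x (rfl | rfl | rfl)
    · rw [hq1c.1, hq1c.2]; linarith
    · rw [hq2c.1, hq2c.2]; linarith
    · rw [hq3c.1, hq3c.2]; linarith
  have bS2 : ∀ v ∈ Slam, (Real.sqrt 3 * lam) * v 0 + (-(1-lam)) * v 1 ≤ (1-lam)/2 := by
    rw [hSlam]; apply lin_le_hull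
    rintro x (rfl | rfl | rfl)
    · rw [hq1c.1, hq1c.2]; nlinarith [hs, hs0]
    · rw [hq2c.1, hq2c.2]
      nlinarith [hs, hs0, hl1, hl2, mul_nonneg (by linarith : (0:ℝ) ≤ lam) (by linarith : (0:ℝ) ≤ 1 - lam)]
    · rw [hq3c.1, hq3c.2]
      nlinarith [hs, hs0, hl1, hl2, mul_nonneg (by linarith : (0:ℝ) ≤ lam) (by linarith : (0:ℝ) ≤ 1 - lam)]
  have bS3 : ∀ v ∈ Slam, (-(Real.sqrt 3 * lam)) * v 0 + (-(1-lam)) * v 1 ≤ (1-lam)/2 := by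
    rw [hSlam]; apply lin_le_hull
    rintro x (rfl | rfl | rfl)
    · rw [hq1c.1, hq1c.2]; nlinarith [hs, hs0]
    · rw [hq2c.1, hq2c.2]
      nlinarith [hs, hs0, hl1, hl2, mul_nonneg (by linarith : (0:ℝ) ≤ lam) (by linarith : (0:ℝ) ≤ 1 - lam)]
    · rw [hq3c.1, hq3c.2]
      nlinarith [hs, hs0, hl1, hl2, mul_nonneg (by linarith : (0:ℝ) ≤ lam) (by linarith : (0:ℝ) ≤ 1 - lam)]
  have hupb : ∀ ρ ∈ {ρ : ℝ | 0 ≤ ρ ∧ ∃ t : Fin 2 → ℝ, t +ᵥ ρ • T ⊆ Slam},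
      ρ ≤ lam * (1 - lam) := by
    rintro ρ ⟨hρ0, t, ht⟩
    have m1 : t + ρ • p1 ∈ Slam :=
      ht (Set.mem_vadd_set.mpr ⟨ρ • p1, Set.smul_mem_smul_set hmp1, rfl⟩)
    have m2 : t + ρ • p2 ∈ Slam :=
      ht (Set.mem_vadd_set.mpr ⟨ρ • p2, Set.smul_mem_smul_set hmp2, rfl⟩)
    have m3 : t + ρ • p3 ∈ Slam :=
      ht (Set.mem_vadd_set.mpr ⟨ρ • p3, Set.smul_mem_smul_set hmp3, rfl⟩)
    have b1 := bS1 _ m1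
    have b2 := bS2 _ m3
    have b3 := bS3 _ m2
    simp [hp1] at b1
    simp [hp3] at b2
    simp [hp2] at b3
    nlinarith [b1, b2, b3, hs, hs0, hl1, hl2,
      mul_nonneg hρ0 (by linarith : (0:ℝ) ≤ lam),
      mul_nonneg hρ0 (by linarith : (0:ℝ) ≤ 1 - lam),
      mul_le_mul_of_nonneg_left b1 (by linarith : (0:ℝ) ≤ 2*(1-lam))]
  have hmemρ0 : lam * (1 - lam) ∈ {ρ : ℝ | 0 ≤ ρ ∧ ∃ t : Fin 2 → ℝ, t +ᵥ ρ • T ⊆ Slam} := by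
    refine ⟨mul_nonneg (by linarith) (by linarith), ![0, (2*lam^2+lam-1)/2], ?_⟩
    have hsub : T ⊆ {x | (lam*(1-lam)) • x + ![0, (2*lam^2+lam-1)/2] ∈ Slam} := by
      rw [hT]
      apply convexHull_min _ (convex_comb_pre hSconv _ _)
      rintro x (rfl | rfl | rfl)
      · have e : (lam*(1-lam)) • p1 + ![0, (2*lam^2+lam-1)/2]
            = (2:ℝ)⁻¹ • q2 + (2:ℝ)⁻¹ • q3 := by
          funext i; fin_cases i <;>
            simp [hq2, hq3, hp1, hp2, hp3] <;> ring
        show _ ∈ Slam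
        rw [e]
        exact hSconv hmq2 hmq3 (by norm_num) (by norm_num) (by norm_num)
      · have e : (lam*(1-lam)) • p2 + ![0, (2*lam^2+lam-1)/2]
            = (1-lam) • q1 + lam • q3 := by
          funext i; fin_cases i <;>
            simp [hq1, hq3, hp1, hp2, hp3] <;> ring
        show _ ∈ Slam
        rw [e]
        exact hSconv hmq1 hmq3 (by linarith) (by linarith) (by ring)
      · have e : (lam*(1-lam)) • p3 + ![0, (2*lam^2+lam-1)/2]
            = (1-lam) • q1 + lam • q2 := by
          funext i; fin_cases i <;>
            simp [hq1, hq2, hp1, hp2, hp3] <;> ring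
        show _ ∈ Slam
        rw [e]
        exact hSconv hmq1 hmq2 (by linarith) (by linarith) (by ring)
    intro y hy
    obtain ⟨x, hxT, rfl⟩ := mem_vadd_smul hy
    have hx := hsub hxT
    rw [add_comm]
    exact hx
  have claim3 : inradius Slam T = lam * (1 - lam) := by
    unfold inradius
    exact le_antisymm (csSup_le ⟨_, hmemρ0⟩ hupb) (le_csSup ⟨_, hupb⟩ hmemρ0)
  -- Claim 2 : DMAX
  have hden : (0:ℝ) < 2*lam+1 := by linarith
  have hdne : (2*lam+1) ≠ 0 := hden.ne'
  have hsMAX : symMAX T = convexHull ℝ (T ∪ -T) := rfl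
  -- the hexagon vertices
  have hm61 : p1 ∈ convexHull ℝ ({p1, p2, p3, -p1, -p2, -p3} : Set (Fin 2 → ℝ)) :=
    subset_convexHull ℝ _ (by simp)
  have hm62 : p2 ∈ convexHull ℝ ({p1, p2, p3, -p1, -p2, -p3} : Set (Fin 2 → ℝ)) :=
    subset_convexHull ℝ _ (by simp)
  have hm63 : p3 ∈ convexHull ℝ ({p1, p2, p3, -p1, -p2, -p3} : Set (Fin 2 → ℝ)) :=
    subset_convexHull ℝ _ (by simp)
  have hm64 : -p1 ∈ convexHull ℝ ({p1, p2, p3, -p1, -p2, -p3} : Set (Fin 2 → ℝ)) :=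
    subset_convexHull ℝ _ (by simp)
  have hm65 : -p2 ∈ convexHull ℝ ({p1, p2, p3, -p1, -p2, -p3} : Set (Fin 2 → ℝ)) :=
    subset_convexHull ℝ _ (by simp)
  have hm66 : -p3 ∈ convexHull ℝ ({p1, p2, p3, -p1, -p2, -p3} : Set (Fin 2 → ℝ)) :=
    subset_convexHull ℝ _ (by simp)
  have hP6conv : Convex ℝ (convexHull ℝ ({p1, p2, p3, -p1, -p2, -p3} : Set (Fin 2 → ℝ))) :=
    convex_convexHull ℝ _
  have hP6H : convexHull ℝ ({p1, p2, p3, -p1, -p2, -p3} : Set (Fin 2 → ℝ)) ⊆ symMAX T := by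
    rw [hsMAX]
    apply convexHull_min _ (convex_convexHull ℝ _)
    rintro x (rfl | rfl | rfl | rfl | rfl | rfl)
    · exact subset_convexHull ℝ _ (Or.inl hmp1)
    · exact subset_convexHull ℝ _ (Or.inl hmp2)
    · exact subset_convexHull ℝ _ (Or.inl hmp3)
    · exact subset_convexHull ℝ _ (Or.inr (Set.neg_mem_neg.mpr hmp1))
    · exact subset_convexHull ℝ _ (Or.inr (Set.neg_mem_neg.mpr hmp2))
    · exact subset_convexHull ℝ _ (Or.inr (Set.neg_mem_neg.mpr hmp3))
  set K : Set (Fin 2 → ℝ) :=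
    ((2*lam+1)/4) • convexHull ℝ ({p1, p2, p3, -p1, -p2, -p3} : Set (Fin 2 → ℝ)) with hK
  have hKconv : Convex ℝ K := hP6conv.smul _
  have hα0 : (0:ℝ) ≤ (4*lam-1)/(2*lam+1) := div_nonneg (by linarith) hden.le
  have hα1 : (4*lam-1)/(2*lam+1) ≤ 1 := by rw [div_le_one hden]; linarith
  have hc0 : (0:ℝ) ≤ 1/4 + (1-lam)/(2*lam+1) := by
    have := div_nonneg (by linarith : (0:ℝ) ≤ 1-lam) hden.le; linarith
  have hd0 : (0:ℝ) ≤ 1/4 - (1-lam)/(2*lam+1) := by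
    have : (1-lam)/(2*lam+1) ≤ 1/4 := by rw [div_le_iff₀ hden]; linarith
    linarith
  -- the nine base memberships
  have b21 : (2:ℝ)⁻¹ • (q2 - q1) ∈ K := by
    refine Set.mem_smul_set.mpr ⟨((4*lam-1)/(2*lam+1)) • p1 + (1 - (4*lam-1)/(2*lam+1)) • (-p2),
      hP6conv hm61 hm65 hα0 (by linarith) (by ring), ?_⟩
    funext i; fin_cases i <;>
      simp [hp1, hp2, hp3, hq1, hq2, hq3] <;> field_simp <;> ring
  have b12 : (2:ℝ)⁻¹ • (q1 - q2) ∈ K := by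
    refine Set.mem_smul_set.mpr ⟨((4*lam-1)/(2*lam+1)) • (-p1) + (1 - (4*lam-1)/(2*lam+1)) • p2,
      hP6conv hm64 hm62 hα0 (by linarith) (by ring), ?_⟩
    funext i; fin_cases i <;>
      simp [hp1, hp2, hp3, hq1, hq2, hq3] <;> field_simp <;> ring
  have b31 : (2:ℝ)⁻¹ • (q3 - q1) ∈ K := by
    refine Set.mem_smul_set.mpr ⟨((4*lam-1)/(2*lam+1)) • p1 + (1 - (4*lam-1)/(2*lam+1)) • (-p3),
      hP6conv hm61 hm66 hα0 (by linarith) (by ring), ?_⟩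
    funext i; fin_cases i <;>
      simp [hp1, hp2, hp3, hq1, hq2, hq3] <;> field_simp <;> ring
  have b13 : (2:ℝ)⁻¹ • (q1 - q3) ∈ K := by
    refine Set.mem_smul_set.mpr ⟨((4*lam-1)/(2*lam+1)) • (-p1) + (1 - (4*lam-1)/(2*lam+1)) • p3,
      hP6conv hm64 hm63 hα0 (by linarith) (by ring), ?_⟩
    funext i; fin_cases i <;>
      simp [hp1, hp2, hp3, hq1, hq2, hq3] <;> field_simp <;> ring
  have b23 : (2:ℝ)⁻¹ • (q2 - q3) ∈ K := by
    refine Set.mem_smul_set.mpr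
      ⟨(1/4 + (1-lam)/(2*lam+1)) • (-p2) + (1/4 + (1-lam)/(2*lam+1)) • p3
        + (1/4 - (1-lam)/(2*lam+1)) • p2 + (1/4 - (1-lam)/(2*lam+1)) • (-p3),
      combo4_mem hP6conv hm65 hm63 hm62 hm66 hc0 hc0 hd0 hd0 (by ring), ?_⟩
    funext i; fin_cases i <;>
      simp [hp1, hp2, hp3, hq1, hq2, hq3] <;> field_simp <;> ring
  have b32 : (2:ℝ)⁻¹ • (q3 - q2) ∈ K := by
    refine Set.mem_smul_set.mpr
      ⟨(1/4 + (1-lam)/(2*lam+1)) • p2 + (1/4 + (1-lam)/(2*lam+1)) • (-p3)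
        + (1/4 - (1-lam)/(2*lam+1)) • (-p2) + (1/4 - (1-lam)/(2*lam+1)) • p3,
      combo4_mem hP6conv hm62 hm66 hm65 hm63 hc0 hc0 hd0 hd0 (by ring), ?_⟩
    funext i; fin_cases i <;>
      simp [hp1, hp2, hp3, hq1, hq2, hq3] <;> field_simp <;> ring
  have bzero : ∀ u : Fin 2 → ℝ, (2:ℝ)⁻¹ • (u - u) ∈ K := by
    intro u
    refine Set.mem_smul_set.mpr ⟨(2:ℝ)⁻¹ • p1 + (2:ℝ)⁻¹ • (-p1),
      hP6conv hm61 hm64 (by norm_num) (by norm_num) (by norm_num), ?_⟩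
    module
  have base : ∀ u ∈ ({q1, q2, q3} : Set (Fin 2 → ℝ)), ∀ v ∈ ({q1, q2, q3} : Set (Fin 2 → ℝ)),
      (2:ℝ)⁻¹ • (u - v) ∈ K := by
    rintro u (rfl | rfl | rfl) v (rfl | rfl | rfl)
    exacts [bzero _, b12, b13, b21, bzero _, b23, b31, b32, bzero _]
  have step1 : ∀ u ∈ ({q1, q2, q3} : Set (Fin 2 → ℝ)), ∀ y ∈ Slam,
      (2:ℝ)⁻¹ • (u - y) ∈ K := by
    intro u hu
    have hsub : Slam ⊆ {y | (-(2:ℝ)⁻¹) • y + (2:ℝ)⁻¹ • u ∈ K} := by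
      rw [hSlam]
      apply convexHull_min _ (convex_comb_pre hKconv _ _)
      intro v hv
      show _ ∈ K
      rw [show (-(2:ℝ)⁻¹) • v + (2:ℝ)⁻¹ • u = (2:ℝ)⁻¹ • (u - v) by module]
      exact base u hu v hv
    intro y hy
    have h := hsub hy
    rw [show (2:ℝ)⁻¹ • (u - y) = (-(2:ℝ)⁻¹) • y + (2:ℝ)⁻¹ • u by module]
    exact h
  have key : ∀ x ∈ Slam, ∀ y ∈ Slam, (2:ℝ)⁻¹ • (x - y) ∈ K := by
    intro x hx y hy
    have hsub : Slam ⊆ {x | (2:ℝ)⁻¹ • x + (-((2:ℝ)⁻¹ • y)) ∈ K} := by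
      rw [hSlam]
      apply convexHull_min _ (convex_comb_pre hKconv _ _)
      intro u hu
      show _ ∈ K
      rw [show (2:ℝ)⁻¹ • u + (-((2:ℝ)⁻¹ • y)) = (2:ℝ)⁻¹ • (u - y) by module]
      exact step1 u hu y hy
    have h := hsub hx
    rw [show (2:ℝ)⁻¹ • (x - y) = (2:ℝ)⁻¹ • x + (-((2:ℝ)⁻¹ • y)) by module]
    exact h
  have hmemU : (2*lam+1)/4 ∈ {ρ : ℝ | 0 ≤ ρ ∧ ∃ t : Fin 2 → ℝ, symAM Slam ⊆ t +ᵥ ρ • symMAX T} := by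
    refine ⟨by linarith, 0, ?_⟩
    rw [zero_vadd]
    intro z hz
    have hz' : z ∈ (2:ℝ)⁻¹ • (Slam - Slam) := hz
    obtain ⟨w, hw, rfl⟩ := Set.mem_smul_set.mp hz'
    obtain ⟨x, hx, y, hy, rfl⟩ := Set.mem_sub.mp hw
    exact Set.smul_set_mono hP6H (key x hx y hy)
  have bHpos : ∀ v ∈ symMAX T, 1 * v 0 + Real.sqrt 3 * v 1 ≤ Real.sqrt 3 := by
    rw [hsMAX]
    apply lin_le_hull
    rintro v (hv | hv)
    · exact lin_le_hull 1 (Real.sqrt 3) (Real.sqrt 3) {p1, p2, p3}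
        (by rintro w (rfl | rfl | rfl) <;> simp [hp1, hp2, hp3] <;> nlinarith [hs, hs0]) v hv
    · rw [Set.mem_neg] at hv
      have h := lin_le_hull (-1) (-(Real.sqrt 3)) (Real.sqrt 3) {p1, p2, p3}
        (by rintro w (rfl | rfl | rfl) <;> simp [hp1, hp2, hp3] <;> nlinarith [hs, hs0]) (-v) hv
      simp only [Pi.neg_apply] at h
      linarith
  have bHneg : ∀ v ∈ symMAX T, (-1) * v 0 + (-(Real.sqrt 3)) * v 1 ≤ Real.sqrt 3 := by
    rw [hsMAX]
    apply lin_le_hull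
    rintro v (hv | hv)
    · exact lin_le_hull (-1) (-(Real.sqrt 3)) (Real.sqrt 3) {p1, p2, p3}
        (by rintro w (rfl | rfl | rfl) <;> simp [hp1, hp2, hp3] <;> nlinarith [hs, hs0]) v hv
    · rw [Set.mem_neg] at hv
      have h := lin_le_hull 1 (Real.sqrt 3) (Real.sqrt 3) {p1, p2, p3}
        (by rintro w (rfl | rfl | rfl) <;> simp [hp1, hp2, hp3] <;> nlinarith [hs, hs0]) (-v) hv
      simp only [Pi.neg_apply] at h
      linarith
  have hlow2 : ∀ ρ ∈ {ρ : ℝ | 0 ≤ ρ ∧ ∃ t : Fin 2 → ℝ, symAM Slam ⊆ t +ᵥ ρ • symMAX T},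
      (2*lam+1)/4 ≤ ρ := by
    rintro ρ ⟨hρ0, t, ht⟩
    have hm : (2:ℝ)⁻¹ • (q2 - q1) ∈ symAM Slam :=
      Set.smul_mem_smul_set (Set.sub_mem_sub hmq2 hmq1)
    have hm' : (2:ℝ)⁻¹ • (q1 - q2) ∈ symAM Slam :=
      Set.smul_mem_smul_set (Set.sub_mem_sub hmq1 hmq2)
    obtain ⟨x, hx, hex⟩ := mem_vadd_smul (ht hm)
    obtain ⟨y, hy, hey⟩ := mem_vadd_smul (ht hm')
    have dx0 : (2:ℝ)⁻¹ * (q2 0 - q1 0) = t 0 + ρ * x 0 := by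
      have := congrFun hex 0; simpa using this
    have dx1 : (2:ℝ)⁻¹ * (q2 1 - q1 1) = t 1 + ρ * x 1 := by
      have := congrFun hex 1; simpa using this
    have dy0 : (2:ℝ)⁻¹ * (q1 0 - q2 0) = t 0 + ρ * y 0 := by
      have := congrFun hey 0; simpa using this
    have dy1 : (2:ℝ)⁻¹ * (q1 1 - q2 1) = t 1 + ρ * y 1 := by
      have := congrFun hey 1; simpa using this
    rw [hq1c.1, hq2c.1] at dx0 dy0
    rw [hq1c.2, hq2c.2] at dx1 dy1
    have bx := bHpos x hx
    have by' := bHneg y hy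
    have hbx := mul_le_mul_of_nonneg_left bx hρ0
    have hby := mul_le_mul_of_nonneg_left by' hρ0
    have hA : 0 ≤ Real.sqrt 3 * (4*ρ - 2*lam - 1) := by nlinarith [hbx, hby, hs, hs0]
    have hs1 : (1:ℝ) ≤ Real.sqrt 3 := by nlinarith [hs, hs0]
    nlinarith [hA, hs1]
  have hcirc2 : circumradius (symAM Slam) (symMAX T) = (2*lam+1)/4 := by
    unfold circumradius
    exact le_antisymm (csInf_le ⟨0, fun ρ hρ => hρ.1⟩ hmemU) (le_csInf ⟨_, hmemU⟩ hlow2)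
  have claim2 : DMAX Slam T = lam + 1/2 := by
    unfold DMAX
    rw [hcirc2]; ring
  exact ⟨claim1, claim2, claim3⟩
end

section
/- Let K be a convex body and C a Minkowski-centered full-dimensional convex body in R^n with 0 in its interior. Then D_HM(K,C) ≥ ((n+1)²/(2n²))·R(K,C). In particular in the plane D_HM(K,C) ≥ (9/8)·R(K,C). -/
open Pointwise Set

variable {V : Type*} [NormedAddCommGroup V] [NormedSpace ℝ V]

/-!
Let `s = s(C) ≤ n`. Helly's theorem puts `K` inside a translate of `n • (-K)`, so a translate of
`((n+1)/(2n)) • K` lies in `(K - K)/2`. Dually, `C ⊆ s • (-C)` gives `C° ⊆ s • (-C°)`, hence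
`((s+1)/(2s)) • C° ⊆ (C° - C°)/2`, and polarity with the bipolar theorem turns this into
`C_HM ⊆ (2s/(s+1)) • C ⊆ (2n/(n+1)) • C`. Comparing circumradii along these two inclusions gives
`R((K-K)/2, C_HM) ≥ ((n+1)/(2n))² R(K, C)`.
-/

open Bornology Filter Topology Module

theorem circumradius_le {K C : Set V} {ρ : ℝ} {t : V} (hρ : 0 ≤ ρ) (h : K ⊆ t +ᵥ ρ • C) :
    circumradius K C ≤ ρ :=
  csInf_le ⟨0, fun _ hx => hx.1⟩ ⟨hρ, t, h⟩

theorem exists_subset_smul_of_isBounded {A B : Set V} (hA : IsBounded A) (hB : B ∈ 𝓝 0) :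
    ∃ ρ : ℝ, 0 ≤ ρ ∧ A ⊆ ρ • B := by
  obtain ⟨r, hr, h⟩ := ((NormedSpace.isVonNBounded_iff ℝ).2 hA hB).exists_pos
  exact ⟨r, hr.le, h r (Real.le_norm_self r)⟩

theorem div_mul_circumradius_le {K C A B : Set V} {a b : ℝ} {v : V} (ha : 0 < a) (hb : 0 < b)
    (hKA : v +ᵥ a • K ⊆ A) (hBC : B ⊆ b • C) (hA : IsBounded A) (hB : B ∈ 𝓝 0) :
    a / b * circumradius K C ≤ circumradius A B := by
  obtain ⟨ρ₀, hρ₀, hAB⟩ := exists_subset_smul_of_isBounded hA hB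
  refine le_csInf ⟨ρ₀, hρ₀, 0, by rwa [zero_vadd]⟩ ?_
  rintro ρ ⟨hρ, t, hAt⟩
  have hK : K ⊆ a⁻¹ • (t - v) +ᵥ (a⁻¹ * ρ * b) • C := by
    intro x hx
    obtain ⟨_, ⟨y, hy, rfl⟩, hxy⟩ := hAt (hKA (vadd_mem_vadd_set (smul_mem_smul_set hx)))
    obtain ⟨z, hz, rfl⟩ := hBC hy
    refine ⟨_, smul_mem_smul_set hz, ?_⟩
    simp only [vadd_eq_add] at hxy ⊢
    have hax : a • x = t + ρ • b • z - v := by rw [hxy]; abel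
    rw [← inv_smul_smul₀ ha.ne' x, hax]
    module
  calc a / b * circumradius K C ≤ a / b * (a⁻¹ * ρ * b) := by
        gcongr
        exact circumradius_le (by positivity) hK
    _ = ρ := by field_simp

theorem StarConvex.smul_subset_smul {C : Set V} {a b : ℝ} (hC : StarConvex ℝ 0 C) (ha : 0 ≤ a)
    (hab : a ≤ b) : a • C ⊆ b • C := by
  rintro _ ⟨x, hx, rfl⟩
  rcases (ha.trans hab).eq_or_lt with rfl | hb
  · rw [le_antisymm hab ha]
    exact smul_mem_smul_set hx
  · refine ⟨(a / b) • x, hC.smul_mem hx (by positivity) ((div_le_one hb).2 hab), ?_⟩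
    simp only [smul_smul, mul_div_cancel₀ _ hb.ne']

theorem vadd_smul_subset_symAM {K : Set V} {s : ℝ} {t : V} (hs : 0 < s) (hK : K ⊆ t +ᵥ s • -K) :
    (2 * s)⁻¹ • -t +ᵥ ((s + 1) / (2 * s)) • K ⊆ symAM K := by
  rintro _ ⟨_, ⟨x, hx, rfl⟩, rfl⟩
  obtain ⟨_, ⟨y, hy, rfl⟩, rfl⟩ := hK hx
  refine ⟨_, Set.sub_mem_sub hx (Set.mem_neg.1 hy), ?_⟩
  simp only [vadd_eq_add]
  match_scalars <;> field_simp <;> ring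

theorem Convex.exists_mem_vadd_smul_of_card_le {K : Set V} (hK : Convex ℝ K) {n : ℕ} (hn : 0 < n)
    (I : Finset V) (hIK : ↑I ⊆ K) (hI : I.card ≤ n + 1) :
    ∃ p : V, ∀ x ∈ I, p ∈ x +ᵥ (n : ℝ) • K := by
  classical
  rcases I.eq_empty_or_nonempty with rfl | hIne
  · simp
  have hn' : (0 : ℝ) < n := by exact_mod_cast hn
  set m : ℝ := (I.card : ℝ)
  have hm : 0 < m := Nat.cast_pos.2 hIne.card_pos
  have hmn : m ≤ n + 1 := by simp only [m]; exact_mod_cast hI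
  refine ⟨((n + 1) / m) • ∑ j ∈ I, j, fun x hx => ?_⟩
  -- `p - x` is `n` times a convex combination of the points of `I`
  set w : V → ℝ := fun j => (n + 1) / (m * n) - if j = x then (n : ℝ)⁻¹ else 0
  have hw_nonneg : ∀ j ∈ I, 0 ≤ w j := fun j _ => by
    have : (n : ℝ)⁻¹ ≤ (n + 1) / (m * n) := by
      rw [inv_eq_one_div, div_le_div_iff₀ hn' (by positivity)]
      nlinarith
    simp only [w]
    split_ifs <;> linarith [inv_pos.2 hn']
  have hw_sum : ∑ j ∈ I, w j = 1 := by
    simp only [w, Finset.sum_sub_distrib, Finset.sum_const, Finset.sum_ite_eq', if_pos hx,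
      nsmul_eq_mul]
    field_simp
    ring
  have hwK : ∑ j ∈ I, w j • j ∈ K := hK.sum_mem hw_nonneg hw_sum fun j hj => hIK hj
  refine ⟨_, smul_mem_smul_set hwK, ?_⟩
  simp only [w, vadd_eq_add, sub_smul, ite_smul, zero_smul, Finset.sum_sub_distrib,
    Finset.sum_ite_eq', if_pos hx]
  rw [← Finset.smul_sum]
  match_scalars <;> field_simp
  ring

theorem Convex.exists_subset_vadd_smul_neg [FiniteDimensional ℝ V] {K : Set V} (hK : Convex ℝ K)
    (hKc : IsCompact K) (hV : 0 < finrank ℝ V) :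
    ∃ t : V, K ⊆ t +ᵥ (finrank ℝ V : ℝ) • -K := by
  obtain ⟨t, ht⟩ : (⋂ x : K, (x : V) +ᵥ (finrank ℝ V : ℝ) • K).Nonempty := by
    refine Convex.helly_theorem_compact' (fun _ => (hK.smul _).vadd _)
      (fun _ => (hKc.smul _).vadd _) fun I hI => ?_
    obtain ⟨p, hp⟩ := hK.exists_mem_vadd_smul_of_card_le hV (I.map (Function.Embedding.subtype _))
      (by simp) (by simpa using hI)
    exact ⟨p, mem_iInter₂.2 fun x hx => hp x (Finset.mem_map_of_mem _ hx)⟩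
  refine ⟨t, fun x hx => ?_⟩
  obtain ⟨_, ⟨k, hk, rfl⟩, hkt⟩ := mem_iInter.1 ht ⟨x, hx⟩
  refine ⟨_, smul_mem_smul_set (neg_mem_neg.2 hk), ?_⟩
  simp only [vadd_eq_add] at hkt ⊢
  rw [← hkt, smul_neg]
  abel

theorem minkAsym_pos [Nontrivial V] {C : Set V} (h0 : 0 ∈ interior C)
    (hC : MinkowskiCentered C) : 0 < minkAsym C := by
  refine (Real.sInf_nonneg fun _ h => h.1).lt_of_ne fun hs => ?_
  have hC0 : C ⊆ {0} := by
    have h := hC.1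
    rw [show minkAsym C = 0 from hs.symm] at h
    exact h.trans (zero_smul_set_subset _)
  simpa [interior_singleton] using interior_mono hC0 h0

theorem minkAsym_le_finrank [FiniteDimensional ℝ V] {C : Set V} (hC : Convex ℝ C)
    (hCc : IsCompact C) (hV : 0 < finrank ℝ V) : minkAsym C ≤ finrank ℝ V := by
  obtain ⟨t, ht⟩ := hC.exists_subset_vadd_smul_neg hCc hV
  exact circumradius_le (Nat.cast_nonneg _) ht

section Polar

variable {n : ℕ} {A B C : Set (EuclideanSpace ℝ (Fin n))}

theorem polarSet_anti (h : A ⊆ B) : polarSet B ⊆ polarSet A :=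
  fun _ ha x hx => ha x (h hx)

theorem smul_mem_polarSet {c : ℝ} {y : EuclideanSpace ℝ (Fin n)} (hy : y ∈ polarSet (c • A)) :
    c • y ∈ polarSet A := by
  intro x hx
  rw [real_inner_smul_left, ← real_inner_smul_right]
  exact hy _ (smul_mem_smul_set hx)

theorem polarSet_polarSet_subset (hC : Convex ℝ C) (hCc : IsClosed C) (h0 : 0 ∈ C) :
    polarSet (polarSet C) ⊆ C := by
  intro x hx
  by_contra hxC
  obtain ⟨f, u, hfC, hfx⟩ := geometric_hahn_banach_closed_point hC hCc hxC
  have hu : 0 < u := by simpa using hfC 0 h0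
  set a := u⁻¹ • (InnerProductSpace.toDual ℝ _).symm f
  have hinner : ∀ y, inner ℝ a y = u⁻¹ * f y := fun y => by
    rw [real_inner_smul_left, InnerProductSpace.toDual_symm_apply]
  have haC : a ∈ polarSet C := fun y hy => by
    rw [hinner, inv_mul_le_one₀ hu]
    exact (hfC y hy).le
  have hxa := hx a haC
  rw [real_inner_comm, hinner, inv_mul_le_one₀ hu] at hxa
  exact hfx.not_ge hxa

theorem polarSet_subset_smul_neg {s : ℝ} (hs : 0 < s) (hCs : C ⊆ s • -C) :
    polarSet C ⊆ s • -polarSet C := by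
  intro a ha
  refine ⟨s⁻¹ • a, fun x hx => ?_, smul_inv_smul₀ hs.ne' a⟩
  obtain ⟨y, hy, rfl⟩ := hCs hx
  calc inner ℝ (-(s⁻¹ • a)) (s • y) = inner ℝ a (-y) := by
        rw [inner_neg_left, inner_neg_right, real_inner_smul_left, real_inner_smul_right,
          inv_mul_cancel_left₀ hs.ne']
    _ ≤ 1 := ha _ hy

theorem symMIN_subset_symHM : symMIN C ⊆ symHM C := by
  rintro x ⟨hx, hnx⟩ _ ⟨_, ⟨a, ha, b, hb, rfl⟩, rfl⟩
  have h1 := ha x hx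
  have h2 := hb (-x) hnx
  rw [real_inner_smul_right, inner_sub_right, real_inner_comm a, real_inner_comm b]
  rw [inner_neg_right] at h2
  linarith

theorem symHM_subset_smul {s : ℝ} (hC : Convex ℝ C) (hCc : IsClosed C) (h0 : 0 ∈ C) (hs : 0 < s)
    (hCs : C ⊆ s • -C) : symHM C ⊆ (2 * s / (s + 1)) • C := by
  intro y hy
  have hP : ((s + 1) / (2 * s)) • polarSet C ⊆ symAM (polarSet C) := by
    have h := vadd_smul_subset_symAM hs (t := (0 : EuclideanSpace ℝ (Fin n)))
      (by rw [zero_vadd]; exact polarSet_subset_smul_neg hs hCs)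
    rwa [neg_zero, smul_zero, zero_vadd] at h
  have hyC : ((s + 1) / (2 * s)) • y ∈ C :=
    polarSet_polarSet_subset hC hCc h0 (smul_mem_polarSet (polarSet_anti hP hy))
  refine ⟨_, hyC, ?_⟩
  have hcoef : 2 * s / (s + 1) * ((s + 1) / (2 * s)) = 1 := by field_simp
  simp only [smul_smul, hcoef, one_smul]

end Polar

theorem mul_circumradius_le_DHM {n : ℕ} (hn : 1 ≤ n) {K C : Set (EuclideanSpace ℝ (Fin n))}
    (hKconv : Convex ℝ K) (hKcomp : IsCompact K) (hCconv : Convex ℝ C) (hCcomp : IsCompact C)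
    (h0 : 0 ∈ interior C) (hMC : MinkowskiCentered C) :
    ((n : ℝ) + 1) ^ 2 / (2 * (n : ℝ) ^ 2) * circumradius K C ≤ DHM K C := by
  have : Nonempty (Fin n) := ⟨⟨0, hn⟩⟩
  have hdim : 0 < finrank ℝ (EuclideanSpace ℝ (Fin n)) := by rwa [finrank_euclideanSpace_fin]
  have hn' : (0 : ℝ) < n := by exact_mod_cast hn
  have hC : C ∈ 𝓝 0 := mem_interior_iff_mem_nhds.1 h0
  obtain ⟨t, hKt⟩ := hKconv.exists_subset_vadd_smul_neg hKcomp hdim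
  rw [finrank_euclideanSpace_fin] at hKt
  have hs : 0 < minkAsym C := minkAsym_pos h0 hMC
  have hsn : minkAsym C ≤ n := by
    simpa using minkAsym_le_finrank hCconv hCcomp hdim
  have hs_le : 2 * minkAsym C / (minkAsym C + 1) ≤ 2 * n / (n + 1) := by
    rw [div_le_div_iff₀ (by positivity) (by positivity)]
    nlinarith
  have hHM : symHM C ⊆ (2 * (n : ℝ) / (n + 1)) • C :=
    (symHM_subset_smul hCconv hCcomp.isClosed (mem_of_mem_nhds hC) hs hMC.1).trans
      ((hCconv.starConvex (mem_of_mem_nhds hC)).smul_subset_smul (by positivity) hs_le)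
  have hHM_nhds : symHM C ∈ 𝓝 0 :=
    mem_of_superset (inter_mem hC (neg_mem_nhds_zero _ hC)) symMIN_subset_symHM
  have hcoef : ((n : ℝ) + 1) ^ 2 / (2 * (n : ℝ) ^ 2)
      = 2 * ((n + 1) / (2 * n) / (2 * n / (n + 1))) := by
    field_simp
  rw [DHM, hcoef, mul_assoc]
  exact mul_le_mul_of_nonneg_left (div_mul_circumradius_le (by positivity) (by positivity)
    (vadd_smul_subset_symAM hn' hKt) hHM ((hKcomp.isBounded.sub hKcomp.isBounded).smul₀ _)
    hHM_nhds) zero_le_two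

theorem jung_DHM_general {n : ℕ} (hn : 2 ≤ n) (K C : Set (EuclideanSpace ℝ (Fin n)))
    (hKconv : Convex ℝ K) (hKcomp : IsCompact K)
    (hCconv : Convex ℝ C) (hCcomp : IsCompact C) (h0 : 0 ∈ interior C)
    (hMC : MinkowskiCentered C) :
    ((n : ℝ) + 1) ^ 2 / (2 * (n : ℝ) ^ 2) * circumradius K C ≤ DHM K C ∧
      (∀ K' C' : Set (EuclideanSpace ℝ (Fin 2)), Convex ℝ K' → IsCompact K' → K'.Nonempty →
        Convex ℝ C' → IsCompact C' → 0 ∈ interior C' → MinkowskiCentered C' →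
        9 / 8 * circumradius K' C' ≤ DHM K' C') := by
  refine ⟨mul_circumradius_le_DHM (by omega) hKconv hKcomp hCconv hCcomp h0 hMC, ?_⟩
  intro K' C' hK'conv hK'comp _ hC'conv hC'comp h0' hMC'
  have h := mul_circumradius_le_DHM (n := 2) one_le_two hK'conv hK'comp hC'conv hC'comp h0' hMC'
  norm_num at h
  exact h

/-- Jung-type inequality for the harmonic diameter: for a Minkowski-centered gauge `C` in
`ℝⁿ`, `D_HM(K,C) ≥ ((n+1)²/(2n²)) R(K,C)`; in particular in the plane
`D_HM(K,C) ≥ (9/8) R(K,C)`. -/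
theorem jung_DHM {n : ℕ} (hn : 2 ≤ n) (K C : Set (EuclideanSpace ℝ (Fin n)))
    (hKconv : Convex ℝ K) (hKcomp : IsCompact K) (hKne : K.Nonempty)
    (hCconv : Convex ℝ C) (hCcomp : IsCompact C) (h0 : 0 ∈ interior C)
    (hMC : MinkowskiCentered C) :
    ((n : ℝ) + 1) ^ 2 / (2 * (n : ℝ) ^ 2) * circumradius K C ≤ DHM K C ∧
      (∀ K' C' : Set (EuclideanSpace ℝ (Fin 2)), Convex ℝ K' → IsCompact K' → K'.Nonempty →
        Convex ℝ C' → IsCompact C' → 0 ∈ interior C' → MinkowskiCentered C' →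
        9 / 8 * circumradius K' C' ≤ DHM K' C') :=
  jung_DHM_general hn K C hKconv hKcomp hCconv hCcomp h0 hMC
end

section
/- Let C be a Minkowski-centered full-dimensional convex body in R^n with 0 in its interior, and ρ ≥ 0. Then ρ·C_MIN with C_MIN = C ∩ (−C) is a completion of C with respect to D_MIN if and only if ρ = s(C) = 1, i.e., C is 0-symmetric. -/
open Pointwise Set

variable {V : Type*} [NormedAddCommGroup V] [NormedSpace ℝ V]

lemma circum_le' {K C : Set V} {ρ : ℝ} (hρ : 0 ≤ ρ) (t : V) (h : K ⊆ t +ᵥ ρ • C) :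
    circumradius K C ≤ ρ :=
  csInf_le ⟨0, fun _ hx => hx.1⟩ ⟨hρ, t, h⟩

lemma diam_le_of_cover {A B : Set V} {t : V} {ρ : ℝ} (hρ : 0 ≤ ρ)
    (hB : Bornology.IsBounded B) (h : A ⊆ t +ᵥ ρ • B) :
    Metric.diam A ≤ ρ * Metric.diam B := by
  apply Metric.diam_le_of_forall_dist_le (mul_nonneg hρ Metric.diam_nonneg)
  intro a ha a' ha'
  obtain ⟨c, ⟨b, hb, rfl⟩, rfl⟩ := h ha
  obtain ⟨c', ⟨b', hb', rfl⟩, rfl⟩ := h ha'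
  simp only []
  rw [vadd_eq_add, vadd_eq_add, dist_add_left, dist_smul₀, Real.norm_of_nonneg hρ]
  exact mul_le_mul_of_nonneg_left (Metric.dist_le_diam_of_mem hB hb hb') hρ

lemma circum_zero_zero : circumradius ({0} : Set V) ({0} : Set V) = 0 := by
  unfold circumradius
  have h : {ρ : ℝ | 0 ≤ ρ ∧ ∃ t : V, ({0} : Set V) ⊆ t +ᵥ ρ • ({0} : Set V)} = Set.Ici 0 := by
    ext ρ
    simp only [Set.mem_setOf_eq, Set.mem_Ici]
    constructor
    · rintro ⟨h, -⟩; exact h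
    · intro h
      refine ⟨h, 0, ?_⟩
      rw [Set.smul_set_singleton, smul_zero]
      intro x hx
      simp only [Set.mem_singleton_iff] at hx
      subst hx
      exact ⟨0, rfl, by simp⟩
  rw [h, csInf_Ici]

lemma not_MC_singleton : ¬ MinkowskiCentered ({0} : Set V) := by
  intro h
  have hneg : -({0} : Set V) = ({0} : Set V) := by simp
  have h1 : minkAsym ({0} : Set V) = 0 := by
    unfold minkAsym; rw [hneg]; exact circum_zero_zero
  have h2 := h.2
  rw [h1, hneg] at h2
  have h3 : (0 : ℝ) • ({0} : Set V) = ({0} : Set V) := by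
    rw [Set.smul_set_singleton, smul_zero]
  rw [h3] at h2
  rw [circum_zero_zero] at h2
  norm_num at h2

lemma diam_pos_of_mem_interior {S : Set V} (hnt : Nontrivial V) (h0 : (0 : V) ∈ interior S)
    (hb : Bornology.IsBounded S) : 0 < Metric.diam S := by
  obtain ⟨ε, hε, hball⟩ := Metric.mem_nhds_iff.1 (mem_interior_iff_mem_nhds.1 h0)
  obtain ⟨v, hv⟩ := exists_ne (0 : V)
  have hvn : 0 < ‖v‖ := norm_pos_iff.2 hv
  set w : V := (ε / (2 * ‖v‖)) • v with hw_def
  have hwn : ‖w‖ = ε / 2 := by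
    rw [hw_def, norm_smul, Real.norm_of_nonneg (by positivity)]
    field_simp
  have hw : w ∈ S := hball (by
    rw [Metric.mem_ball, dist_zero_right, hwn]; linarith)
  have h0S : (0 : V) ∈ S := interior_subset h0
  have hd := Metric.dist_le_diam_of_mem hb hw h0S
  rw [dist_zero_right, hwn] at hd
  linarith

lemma symAM_eq_self {K : Set V} (hK : Convex ℝ K) (hs : -K = K) : symAM K = K := by
  unfold symAM
  rw [sub_eq_add_neg, hs]
  have h2 : K + K = (2 : ℝ) • K := by
    rw [show (2:ℝ) = 1 + 1 by norm_num, hK.add_smul zero_le_one zero_le_one, one_smul]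
  rw [h2, smul_smul]
  norm_num

lemma sym_fit {S C : Set V} (hS : ∀ x ∈ S, -x ∈ S) (hC : Convex ℝ C) (hCs : -C = C)
    {t : V} {ρ : ℝ} (h : S ⊆ t +ᵥ ρ • C) : S ⊆ ρ • C := by
  intro x hx
  obtain ⟨a, ha, hax⟩ := h hx
  obtain ⟨b, hb, hbx⟩ := h (hS x hx)
  simp only [vadd_eq_add] at hax hbx
  have ea : a = x - t := by rw [← hax]; abel
  have eb : b = -x - t := by rw [← hbx]; abel
  have hsym : -(ρ • C) = ρ • C := by rw [← smul_set_neg, hCs]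
  have hnb : -b ∈ ρ • C := by
    rw [← hsym]; exact Set.neg_mem_neg.2 hb
  have hρC : Convex ℝ (ρ • C) := hC.smul ρ
  have key := hρC ha hnb (by norm_num : (0:ℝ) ≤ 2⁻¹) (by norm_num : (0:ℝ) ≤ 2⁻¹) (by norm_num)
  have hx' : (2⁻¹ : ℝ) • a + (2⁻¹ : ℝ) • (-b) = x := by
    subst ea; subst eb; module
  rwa [hx'] at key

/-- For a Minkowski-centered gauge `C` and `ρ ≥ 0`, the dilatate `ρ • C_MIN` of the minimum
symmetrization `C_MIN = C ∩ (-C)` is a completion of `C` with respect to `D_MIN` if and only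
if `ρ = s(C) = 1`, i.e. `C` is 0-symmetric. -/
theorem CMIN_completion_iff_symmetric {n : ℕ} (C : Set (EuclideanSpace ℝ (Fin n)))
    (hCconv : Convex ℝ C) (hCcomp : IsCompact C) (h0 : 0 ∈ interior C)
    (hMC : MinkowskiCentered C) (ρ : ℝ) (hρ : 0 ≤ ρ) :
    IsCompletion (fun K => DMIN K C) C (ρ • symMIN C) ↔ ρ = minkAsym C ∧ minkAsym C = 1 := by
  classical
  set s := minkAsym C with hs_def
  set M := symMIN C with hM_def
  have hCb : Bornology.IsBounded C := hCcomp.isBounded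
  have h0C : (0 : (EuclideanSpace ℝ (Fin n))) ∈ C := interior_subset h0
  -- the space is nontrivial
  have hnt : Nontrivial (EuclideanSpace ℝ (Fin n)) := by
    by_contra h
    have hss : Subsingleton (EuclideanSpace ℝ (Fin n)) := not_nontrivial_iff_subsingleton.1 h
    have hC0 : C = {0} := by
      ext x
      simp only [Set.mem_singleton_iff]
      exact ⟨fun _ => Subsingleton.elim x 0, fun hx => hx ▸ h0C⟩
    exact not_MC_singleton (hC0 ▸ hMC)
  have hdC : 0 < Metric.diam C := diam_pos_of_mem_interior hnt h0 hCb
  -- facts about M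
  have hMsub : M ⊆ C := Set.inter_subset_left
  have hMb : Bornology.IsBounded M := hCb.subset hMsub
  have hMconv : Convex ℝ M := hCconv.inter hCconv.neg
  have hMsymm : -M = M := by
    rw [hM_def]
    show -(C ∩ -C) = C ∩ -C
    rw [Set.inter_neg, neg_neg, Set.inter_comm]
  have h0negC : (0 : (EuclideanSpace ℝ (Fin n))) ∈ interior (-C) := by
    have hopen : IsOpen ((Neg.neg ⁻¹' (interior C)) : Set (EuclideanSpace ℝ (Fin n))) :=
      isOpen_interior.preimage continuous_neg
    have hsub : ((Neg.neg ⁻¹' (interior C)) : Set (EuclideanSpace ℝ (Fin n))) ⊆ -C := fun x hx =>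
      Set.mem_neg.2 (interior_subset hx)
    exact interior_maximal hsub hopen (by simpa using h0)
  have h0M : (0 : (EuclideanSpace ℝ (Fin n))) ∈ interior M := by
    rw [hM_def]
    show (0 : (EuclideanSpace ℝ (Fin n))) ∈ interior (C ∩ -C)
    rw [interior_inter]
    exact ⟨h0, h0negC⟩
  have hdM : 0 < Metric.diam M := diam_pos_of_mem_interior hnt h0M hMb
  -- facts about s
  have hs_nonneg : 0 ≤ s := Real.sInf_nonneg fun x hx => hx.1
  have hCsub : C ⊆ s • (-C) := hMC.1
  have hnegC_eq : (-1 : ℝ) • C = -C := by rw [neg_smul_set, one_smul]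
  have hCnegb : Bornology.IsBounded (-C) := hnegC_eq ▸ hCb.smul₀ (-1 : ℝ)
  have hdnegC : Metric.diam (-C) = Metric.diam C := by
    rw [← hnegC_eq, diam_smul₀]
    simp
  have hs1 : 1 ≤ s := by
    have hd : Metric.diam C ≤ s * Metric.diam (-C) :=
      diam_le_of_cover hs_nonneg hCnegb (by rw [zero_vadd]; exact hCsub)
    rw [hdnegC] at hd
    nlinarith
  constructor
  · -- forward direction
    rintro ⟨hsub, -, -, -, hDeq⟩
    have hDeq' : DMIN (ρ • M) C = DMIN C C := hDeq
    -- s ≤ ρ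
    have hρM_negC : ρ • M ⊆ ρ • (-C) := fun z hz => by
      obtain ⟨m, hm, rfl⟩ := hz
      exact ⟨m, hm.2, rfl⟩
    have hsρ : s ≤ ρ := circum_le' hρ 0 (by rw [zero_vadd]; exact hsub.trans hρM_negC)
    -- D_MIN(ρ M, C) = 2ρ
    have hsymAM_ρM : symAM (ρ • M) = ρ • M :=
      symAM_eq_self (hMconv.smul ρ) (by rw [← smul_set_neg, hMsymm])
    have hcirc_ρM : circumradius (ρ • M) M = ρ := by
      apply le_antisymm
      · exact circum_le' hρ 0 (by rw [zero_vadd])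
      · unfold circumradius
        refine le_csInf ⟨ρ, hρ, 0, by rw [zero_vadd]⟩ ?_
        rintro ρ' ⟨hρ'0, t, hsub'⟩
        have h1 : Metric.diam (ρ • M) ≤ ρ' * Metric.diam M := diam_le_of_cover hρ'0 hMb hsub'
        have h2 : Metric.diam (ρ • M) = ρ * Metric.diam M := by
          rw [diam_smul₀, Real.norm_of_nonneg hρ]
        nlinarith
    have hDρM : DMIN (ρ • M) C = 2 * ρ := by
      unfold DMIN
      rw [← hM_def, hsymAM_ρM, hcirc_ρM]
    -- D_MIN(C,C) ≤ s + 1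
    have hsne : s + 1 ≠ 0 := by positivity
    have key : ∀ u v : (EuclideanSpace ℝ (Fin n)), u ∈ C → v ∈ C → (s + 1)⁻¹ • (u - v) ∈ C := by
      intro u v hu hv
      obtain ⟨b, hb, hbv⟩ := hCsub hv
      have hc : -b ∈ C := Set.mem_neg.1 hb
      have hcomb : (s + 1)⁻¹ • u + (s * (s + 1)⁻¹) • (-b) ∈ C :=
        hCconv hu hc (by positivity) (mul_nonneg hs_nonneg (by positivity))
          (by
            have hh : (s + 1)⁻¹ + s * (s + 1)⁻¹ = (1 + s) * (s + 1)⁻¹ := by ring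
            rw [hh, add_comm, mul_inv_cancel₀ hsne])
      have heq : (s + 1)⁻¹ • (u - v) = (s + 1)⁻¹ • u + (s * (s + 1)⁻¹) • (-b) := by
        rw [← hbv]; module
      rw [heq]; exact hcomb
    have hAMC : symAM C ⊆ (0 : (EuclideanSpace ℝ (Fin n))) +ᵥ ((s + 1) / 2) • M := by
      rw [zero_vadd]
      rintro z ⟨d, ⟨x, hx, y, hy, rfl⟩, rfl⟩
      refine ⟨(s + 1)⁻¹ • (x - y), ⟨key x y hx hy, ?_⟩, ?_⟩
      · apply Set.mem_neg.2
        have hne : -((s + 1)⁻¹ • (x - y)) = (s + 1)⁻¹ • (y - x) := by module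
        rw [hne]
        exact key y x hy hx
      · show ((s + 1) / 2) • ((s + 1)⁻¹ • (x - y)) = (2:ℝ)⁻¹ • (x - y)
        rw [smul_smul]
        congr 1
        field_simp
    have hDC_le : DMIN C C ≤ s + 1 := by
      unfold DMIN
      rw [← hM_def]
      have := circum_le' (by positivity : (0:ℝ) ≤ (s + 1) / 2) 0 hAMC
      linarith
    rw [hDρM] at hDeq'
    constructor <;> linarith
  · -- backward direction
    rintro ⟨hρs, hs_one⟩
    have hsymm : -C = C := by
      have h1 : C ⊆ -C := by
        have h := hCsub
        rw [hs_one, one_smul] at h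
        exact h
      refine Set.Subset.antisymm (fun x hx => ?_) h1
      have h2 : -x ∈ C := Set.mem_neg.1 hx
      have h3 : -x ∈ -C := h1 h2
      simpa using Set.mem_neg.1 h3
    have hMeqC : M = C := by
      rw [hM_def]
      show C ∩ -C = C
      rw [hsymm, Set.inter_self]
    have hset : ρ • M = C := by
      rw [hρs, hs_one, hMeqC, one_smul]
    rw [hset]
    have hsymAMC : symAM C = C := symAM_eq_self hCconv hsymm
    have hccc : circumradius C C = 1 := by
      apply le_antisymm
      · exact circum_le' zero_le_one 0 (by rw [zero_vadd, one_smul])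
      · unfold circumradius
        refine le_csInf ⟨1, zero_le_one, 0, by rw [zero_vadd, one_smul]⟩ ?_
        rintro ρ' ⟨hρ'0, t, hsub'⟩
        have := diam_le_of_cover hρ'0 hCb hsub'
        nlinarith
    refine ⟨subset_rfl, hCconv, hCcomp, ?_, rfl⟩
    intro K' hK'conv hK'comp hssub
    show DMIN C C < DMIN K' C
    have hDCC : DMIN C C = 2 := by
      unfold DMIN
      rw [← hM_def, hMeqC, hsymAMC, hccc]
      norm_num
    -- construct the witness point y outside C
    obtain ⟨x, hxK', hxC⟩ := Set.exists_of_ssubset hssub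
    obtain ⟨f, u, hfu⟩ := geometric_hahn_banach_closed_point hCconv hCcomp.isClosed hxC
    obtain ⟨c, hcC, hcmax⟩ := hCcomp.exists_isMaxOn ⟨0, h0C⟩ f.continuous.continuousOn
    have hmc : -c ∈ K' := hssub.1 (hsymm ▸ Set.neg_mem_neg.2 hcC)
    set y : (EuclideanSpace ℝ (Fin n)) := (2 : ℝ)⁻¹ • (x - -c) with hy_def
    have hy_mem : y ∈ symAM K' := ⟨x - -c, Set.sub_mem_sub hxK' hmc, rfl⟩
    have hfy : f y = 2⁻¹ * (f x + f c) := by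
      rw [hy_def, map_smul, map_sub, map_neg, smul_eq_mul]
      ring
    have hyC : y ∉ C := by
      intro hy
      have h1 := hcmax hy
      have h2 := hfu.1 c hcC
      have h3 := hfu.2
      simp only [Set.mem_setOf_eq] at h1
      rw [hfy] at h1
      linarith
    -- symAM K' is symmetric
    have hSneg : ∀ z ∈ symAM K', -z ∈ symAM K' := by
      rintro z ⟨d, ⟨a, ha, b, hb, rfl⟩, rfl⟩
      exact ⟨b - a, Set.sub_mem_sub hb ha, by module⟩
    -- norm bound on C
    obtain ⟨RC0, hRC0⟩ := hCb.subset_closedBall 0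
    set RC := max RC0 1 with hRC_def
    have hRCpos : (0 : ℝ) < RC := lt_of_lt_of_le one_pos (le_max_right _ _)
    have hRC : ∀ w ∈ C, ‖w‖ ≤ RC := by
      intro w hw
      have := hRC0 hw
      rw [Metric.mem_closedBall, dist_zero_right] at this
      exact this.trans (le_max_left _ _)
    -- distance from y to C
    have hd : 0 < Metric.infDist y C :=
      (hCcomp.isClosed.notMem_iff_infDist_pos ⟨0, h0C⟩).1 hyC
    -- nonemptiness of the circumradius defining set
    obtain ⟨ε, hε, hball⟩ := Metric.mem_nhds_iff.1 (mem_interior_iff_mem_nhds.1 h0)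
    have hK'b : Bornology.IsBounded (symAM K') :=
      ((hK'comp.isBounded.sub hK'comp.isBounded)).smul₀ _
    obtain ⟨r0, hr0⟩ := hK'b.subset_ball 0
    set r1 := max r0 1 with hr1_def
    have hr1 : (0 : ℝ) < r1 := lt_of_lt_of_le one_pos (le_max_right _ _)
    have hbig : symAM K' ⊆ (0 : (EuclideanSpace ℝ (Fin n))) +ᵥ (r1 / ε) • C := by
      rw [zero_vadd]
      intro z hz
      have hz' : ‖z‖ < r1 := by
        have := hr0 hz
        rw [Metric.mem_ball, dist_zero_right] at this
        exact lt_of_lt_of_le this (le_max_left _ _)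
      refine ⟨(ε / r1) • z, hball ?_, ?_⟩
      · rw [Metric.mem_ball, dist_zero_right, norm_smul, Real.norm_of_nonneg (by positivity)]
        calc ε / r1 * ‖z‖ < ε / r1 * r1 := by
              exact mul_lt_mul_of_pos_left hz' (by positivity)
          _ = ε := by field_simp
      · show (r1 / ε) • ((ε / r1) • z) = z
        rw [smul_smul, show r1 / ε * (ε / r1) = 1 by field_simp, one_smul]
    -- lower bound on the circumradius
    have hlow : 1 + Metric.infDist y C / RC ≤ circumradius (symAM K') C := by
      unfold circumradius
      refine le_csInf ⟨r1 / ε, by positivity, 0, hbig⟩ ?_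
      rintro ρ' ⟨hρ'0, t, hsub'⟩
      have hfit : symAM K' ⊆ ρ' • C := sym_fit hSneg hCconv hsymm hsub'
      obtain ⟨c', hc'C, hc'y0⟩ := hfit hy_mem
      have hc'y : ρ' • c' = y := hc'y0
      rcases le_or_gt ρ' 1 with h1 | h1
      · exfalso
        apply hyC
        have hmem := hCconv hc'C h0C hρ'0 (by linarith : (0:ℝ) ≤ 1 - ρ') (by ring)
        rw [smul_zero, add_zero, hc'y] at hmem
        exact hmem
      · have hdy : Metric.infDist y C ≤ (ρ' - 1) * RC := by
          calc Metric.infDist y C ≤ dist y c' := Metric.infDist_le_dist_of_mem hc'C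
            _ = ‖(ρ' - 1) • c'‖ := by
                rw [← hc'y, dist_eq_norm]
                congr 1
                module
            _ = (ρ' - 1) * ‖c'‖ := by
                rw [norm_smul, Real.norm_of_nonneg (by linarith)]
            _ ≤ (ρ' - 1) * RC := by
                exact mul_le_mul_of_nonneg_left (hRC c' hc'C) (by linarith)
        have hq : Metric.infDist y C / RC ≤ ρ' - 1 := by
          rw [div_le_iff₀ hRCpos]
          linarith
        linarith
    rw [hDCC]
    unfold DMIN
    rw [← hM_def, hMeqC]
    have : (0:ℝ) < Metric.infDist y C / RC := by positivity
    linarith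
end
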